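/- arXiv:1906.10525 — 8 statements merged into one kernel-verified Lean document; each statement's English description precedes it below -/
import Mathlib

section
/- Let A be a Heffter array H(m,n;s,t). Suppose ω_r is a permutation of the set of entries of A that is the composition of m disjoint cycles, one for each row, each cyclically permuting the s entries of that row, and ω_c is a permutation that is the composition of n disjoint cycles, one for each column, each cyclically permuting the t entries of that column. If ω_r and ω_c are compatible (i.e., ω_r ∘ ω_c is a single cycle of length ms on the set of entries), then either: (i) m, n, s and t are all odd; or (ii) m is odd, n is even and s is even; or (iii) m is even, n is odd and t is even. -/
/-!
A permutation that cyclically permutes a nonempty set of `k` cells and fixes all other cells has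
sign `(-1)^(k+1)`. Hence `sgn ω_r = (-1)^(m(s+1))`, `sgn ω_c = (-1)^(n(t+1))` and
`sgn(ω_r ∘ ω_c) = (-1)^(ms+1)`, so multiplicativity of the sign gives
`ms + 1 ≡ m(s+1) + n(t+1) (mod 2)`. Together with `ms = nt`, this congruence leaves exactly the
three parity patterns of the statement.
-/

/-- A Heffter array `H(m,n;s,t)`: an `m × n` partially filled array of integers
(empty cells are represented by `0`) such that each row has exactly `s` filled cells,
each column has exactly `t` filled cells, every row and column sums to `0` modulo
`2ms+1`, and for each `1 ≤ x ≤ ms` exactly one of `x, -x` appears, in exactly one cell. -/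
def IsHeffter (m n s t : ℕ) (A : Fin m → Fin n → ℤ) : Prop :=
  (∀ i, (Finset.univ.filter (fun j => A i j ≠ 0)).card = s) ∧
  (∀ j, (Finset.univ.filter (fun i => A i j ≠ 0)).card = t) ∧
  (∀ i, (∑ j, A i j) ≡ 0 [ZMOD (2 * m * s + 1)]) ∧
  (∀ j, (∑ i, A i j) ≡ 0 [ZMOD (2 * m * s + 1)]) ∧
  (∀ i j, A i j ≠ 0 → (A i j).natAbs ∈ Finset.Icc 1 (m * s)) ∧
  (∀ v ∈ Finset.Icc 1 (m * s), ∃! c : Fin m × Fin n, (A c.1 c.2).natAbs = v)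

/-- `σ` is a composition of disjoint cycles, one for each row: it preserves rows,
fixes empty cells, and acts transitively (hence as a single cycle) on the filled
cells of each row. -/
def IsRowOrdering (m n : ℕ) (A : Fin m → Fin n → ℤ)
    (σ : Equiv.Perm (Fin m × Fin n)) : Prop :=
  (∀ c, (σ c).1 = c.1) ∧ (∀ c, A c.1 c.2 = 0 → σ c = c) ∧
  (∀ c c' : Fin m × Fin n, c.1 = c'.1 → A c.1 c.2 ≠ 0 → A c'.1 c'.2 ≠ 0 →
    ∃ e : ℕ, (σ ^ e) c = c')

/-- `σ` is a composition of disjoint cycles, one for each column. -/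
def IsColOrdering (m n : ℕ) (A : Fin m → Fin n → ℤ)
    (σ : Equiv.Perm (Fin m × Fin n)) : Prop :=
  (∀ c, (σ c).2 = c.2) ∧ (∀ c, A c.1 c.2 = 0 → σ c = c) ∧
  (∀ c c' : Fin m × Fin n, c.2 = c'.2 → A c.1 c.2 ≠ 0 → A c'.1 c'.2 ≠ 0 →
    ∃ e : ℕ, (σ ^ e) c = c')

/-- `ωr` and `ωc` are compatible: `ω_r ∘ ω_c` (first apply `ω_r`, then `ω_c`,
following the paper's convention) is a single cycle on the `ms` filled cells. -/
def Compatible (m n : ℕ) (A : Fin m → Fin n → ℤ)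
    (ωr ωc : Equiv.Perm (Fin m × Fin n)) : Prop :=
  ∀ c c' : Fin m × Fin n, A c.1 c.2 ≠ 0 → A c'.1 c'.2 ≠ 0 →
    ∃ e : ℕ, ((ωr.trans ωc) ^ e) c = c'

open Finset Equiv Equiv.Perm

namespace Equiv.Perm

variable {α β : Type*}

theorem sign_eq_neg_one_pow_card_add_one [Fintype α] [DecidableEq α] {σ : Perm α}
    {s : Finset α} (hs : s.Nonempty) (hfix : ∀ a ∉ s, σ a = a)
    (hcycle : ∀ a ∈ s, ∀ b ∈ s, σ.SameCycle a b) :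
    sign σ = (-1) ^ (#s + 1) := by
  have mem_of_ne {a : α} (ha : σ a ≠ a) : a ∈ s := by_contra fun h => ha (hfix a h)
  rcases eq_or_ne σ 1 with rfl | hσ
  · have hs1 : #s = 1 := le_antisymm
      (card_le_one.mpr fun a ha b hb => sameCycle_one.mp (hcycle a ha b hb)) hs.card_pos
    simp [hs1]
  obtain ⟨a, ha⟩ : ∃ a, σ a ≠ a := by
    by_contra! h
    exact hσ (ext h)
  have hsupp : σ.support = s := by
    ext b
    rw [mem_support]
    exact ⟨mem_of_ne, fun hb => (hcycle a (mem_of_ne ha) b hb).apply_eq_self_iff.not.mp ha⟩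
  have hcyc : σ.IsCycle := ⟨a, ha, fun b hb => hcycle a (mem_of_ne ha) b (mem_of_ne hb)⟩
  rw [hcyc.sign, hsupp, pow_succ, mul_neg_one]

def sndPerm (σ : Perm (α × β)) (hσ : ∀ c, (σ c).1 = c.1) (a : α) : Perm β where
  toFun b := (σ (a, b)).2
  invFun b := (σ.symm (a, b)).2
  left_inv b := by
    simp only
    rw [show (a, (σ (a, b)).2) = σ (a, b) from Prod.ext (hσ (a, b)).symm rfl, symm_apply_apply]
  right_inv b := by
    have h1 : (σ.symm (a, b)).1 = a := by simpa using (hσ (σ.symm (a, b))).symm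
    simp only
    rw [show (a, (σ.symm (a, b)).2) = σ.symm (a, b) from Prod.ext h1.symm rfl, apply_symm_apply]

variable {σ : Perm (α × β)} (hσ : ∀ c, (σ c).1 = c.1)
include hσ

theorem prodCongrRight_sndPerm : prodCongrRight (sndPerm σ hσ) = σ := by
  ext ⟨a, b⟩ <;> simp [sndPerm, hσ]

theorem sndPerm_pow_apply (e : ℕ) (a : α) (b : β) :
    (sndPerm σ hσ a ^ e) b = ((σ ^ e) (a, b)).2 := by
  induction e generalizing b with
  | zero => rfl
  | succ e ih =>
    rw [pow_succ, mul_apply, ih, pow_succ, mul_apply]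
    congr 2
    exact Prod.ext (hσ (a, b)).symm rfl

end Equiv.Perm

section Heffter

variable {m n s t : ℕ} {A : Fin m → Fin n → ℤ}

def filledCells (A : Fin m → Fin n → ℤ) : Finset (Fin m × Fin n) := {c | A c.1 c.2 ≠ 0}

theorem card_filledCells_eq_sum_rows :
    #(filledCells A) = ∑ i, #{j | A i j ≠ 0} := by
  simp only [filledCells, card_filter, Fintype.sum_prod_type]

theorem card_filledCells_eq_sum_cols :
    #(filledCells A) = ∑ j, #{i | A i j ≠ 0} := by
  simp only [filledCells, card_filter, Fintype.sum_prod_type_right]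

theorem IsHeffter.card_filledCells_eq_rows (hA : IsHeffter m n s t A) :
    #(filledCells A) = m * s := by
  simp [card_filledCells_eq_sum_rows, hA.1]

theorem IsHeffter.card_filledCells_eq_cols (hA : IsHeffter m n s t A) :
    #(filledCells A) = n * t := by
  simp [card_filledCells_eq_sum_cols, hA.2.1]

theorem IsRowOrdering.sign_eq {σ : Perm (Fin m × Fin n)} (hr : IsRowOrdering m n A σ)
    (hrow : ∀ i, #{j | A i j ≠ 0} = s) (hs : 0 < s) : sign σ = (-1) ^ ((s + 1) * m) := by
  have hrow_sign : ∀ i, sign (sndPerm σ hr.1 i) = (-1) ^ (s + 1) := by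
    intro i
    rw [← hrow i]
    refine sign_eq_neg_one_pow_card_add_one (card_pos.mp (hrow i ▸ hs)) ?_ ?_
    · intro j hj
      simp only [mem_filter, mem_univ, true_and, not_not] at hj
      exact congrArg Prod.snd (hr.2.1 (i, j) hj)
    · intro j hj j' hj'
      simp only [mem_filter, mem_univ, true_and] at hj hj'
      obtain ⟨e, he⟩ := hr.2.2 (i, j) (i, j') rfl hj hj'
      exact ⟨e, by rw [zpow_natCast, sndPerm_pow_apply, he]⟩
  rw [← prodCongrRight_sndPerm hr.1, sign_prodCongrRight]
  simp [hrow_sign, pow_mul]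

theorem IsColOrdering.transpose {σ : Perm (Fin m × Fin n)} (hc : IsColOrdering m n A σ) :
    IsRowOrdering n m (fun j i => A i j) ((prodComm _ _).permCongr σ) := by
  refine ⟨fun c => hc.1 c.swap, fun c hc0 => ?_, fun c c' hcc' hc0 hc0' => ?_⟩
  · simp [hc.2.1 c.swap hc0]
  · obtain ⟨e, he⟩ := hc.2.2 c.swap c'.swap hcc' hc0 hc0'
    refine ⟨e, ?_⟩
    rw [← permCongrHom_coe, ← map_pow]
    simp [he]

theorem IsColOrdering.sign_eq {σ : Perm (Fin m × Fin n)} (hc : IsColOrdering m n A σ)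
    (hcol : ∀ j, #{i | A i j ≠ 0} = t) (ht : 0 < t) : sign σ = (-1) ^ ((t + 1) * n) := by
  rw [← sign_permCongr (prodComm _ _)]
  exact hc.transpose.sign_eq hcol ht

theorem Compatible.sign_eq {ωr ωc : Perm (Fin m × Fin n)} (hcompat : Compatible m n A ωr ωc)
    (hr : IsRowOrdering m n A ωr) (hc : IsColOrdering m n A ωc)
    (hne : (filledCells A).Nonempty) :
    sign (ωr.trans ωc) = (-1) ^ (#(filledCells A) + 1) := by
  refine sign_eq_neg_one_pow_card_add_one hne ?_ ?_
  · intro c hc'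
    simp only [filledCells, mem_filter, mem_univ, true_and, not_not] at hc'
    simp [hr.2.1 c hc', hc.2.1 c hc']
  · intro c hc' c' hc''
    simp only [filledCells, mem_filter, mem_univ, true_and] at hc' hc''
    obtain ⟨e, he⟩ := hcompat c c' hc' hc''
    exact ⟨e, by rw [zpow_natCast, he]⟩

end Heffter

theorem even_add_of_neg_one_pow_eq {a b : ℕ} (h : (-1 : ℤˣ) ^ a = (-1) ^ b) : Even (a + b) := by
  rw [← neg_one_pow_eq_one_iff_even (R := ℤˣ) (by decide), pow_add, h, ← pow_add, ← two_mul,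
    pow_mul]
  simp

theorem parity_trichotomy {m n s t : ℕ} (hN : m * s = n * t)
    (h : Even (m * s + 1 + ((t + 1) * n + (s + 1) * m))) :
    (Odd m ∧ Odd n ∧ Odd s ∧ Odd t) ∨ (Odd m ∧ Even n ∧ Even s) ∨
      (Even m ∧ Odd n ∧ Even t) := by
  have h' : Even (n * t + 1 + ((t + 1) * n + (s + 1) * m)) := hN ▸ h
  simp only [← Nat.not_even_iff_odd]
  simp only [Nat.even_add, Nat.even_mul, Nat.even_add_one] at h h'
  tauto

theorem statement0_general (m n s t : ℕ) (hm : 0 < m) (hs : 0 < s) (ht : 0 < t)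
    (A : Fin m → Fin n → ℤ) (hA : IsHeffter m n s t A)
    (ωr ωc : Equiv.Perm (Fin m × Fin n))
    (hr : IsRowOrdering m n A ωr) (hc : IsColOrdering m n A ωc)
    (hcompat : Compatible m n A ωr ωc) :
    (Odd m ∧ Odd n ∧ Odd s ∧ Odd t) ∨ (Odd m ∧ Even n ∧ Even s) ∨
      (Even m ∧ Odd n ∧ Even t) := by
  have hrows := hA.card_filledCells_eq_rows
  have hne : (filledCells A).Nonempty := by
    rw [← card_pos, hrows]
    positivity
  have hsign := sign_trans ωr ωc
  rw [hcompat.sign_eq hr hc hne, hc.sign_eq hA.2.1 ht, hr.sign_eq hA.1 hs, ← pow_add,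
    hrows] at hsign
  exact parity_trichotomy (hrows.symm.trans hA.card_filledCells_eq_cols)
    (even_add_of_neg_one_pow_eq hsign)

theorem statement0 (m n s t : ℕ) (hm : 0 < m) (hn : 0 < n) (hs : 0 < s) (ht : 0 < t)
    (A : Fin m → Fin n → ℤ) (hA : IsHeffter m n s t A)
    (ωr ωc : Equiv.Perm (Fin m × Fin n))
    (hr : IsRowOrdering m n A ωr) (hc : IsColOrdering m n A ωc)
    (hcompat : Compatible m n A ωr ωc) :
    (Odd m ∧ Odd n ∧ Odd s ∧ Odd t) ∨ (Odd m ∧ Even n ∧ Even s) ∨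
      (Even m ∧ Odd n ∧ Even t) :=
  statement0_general m n s t hm hs ht A hA ωr ωc hr hc hcompat
end

section
/- Let k be odd and let A be a Heffter array H(n;k) whose non-empty cells are exactly the union of k diagonals D_{g(1)}, …, D_{g(k)} with 0 ≤ g(1) < g(2) < ⋯ < g(k) ≤ n−1. For h = 2,…,k set s_h = g(h) − g(h−1) (mod n) and set s_1 = g(1) − g(k) (mod n). If gcd(n, s_h) = 1 for all h = 1,…,k and A is globally simple, then A has an ordering which is both simple and compatible; that is, there is a choice of simple cyclic orderings of all rows and all columns for which the composed row permutation ω_r and composed column permutation ω_c are compatible. -/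
/-- A square Heffter array `H(n;k)`: an `n × n` partially filled array of integers
(empty cells represented by `0`), rows and columns indexed by `ZMod n`, such that each
row and each column has exactly `k` filled cells, every row and column sums to `0`
modulo `2nk+1`, and for each `1 ≤ x ≤ nk` exactly one of `x, -x` appears, in exactly
one cell. -/
def IsHeffterSq (n k : ℕ) [NeZero n] (A : ZMod n → ZMod n → ℤ) : Prop :=
  (∀ a : ZMod n, (Finset.univ.filter (fun b => A a b ≠ 0)).card = k) ∧
  (∀ b : ZMod n, (Finset.univ.filter (fun a => A a b ≠ 0)).card = k) ∧
  (∀ a : ZMod n, (∑ b : ZMod n, A a b) ≡ 0 [ZMOD (2 * n * k + 1)]) ∧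
  (∀ b : ZMod n, (∑ a : ZMod n, A a b) ≡ 0 [ZMOD (2 * n * k + 1)]) ∧
  (∀ a b : ZMod n, A a b ≠ 0 → (A a b).natAbs ∈ Finset.Icc 1 (n * k)) ∧
  (∀ v ∈ Finset.Icc 1 (n * k), ∃! c : ZMod n × ZMod n, (A c.1 c.2).natAbs = v)

/-- The natural (left-to-right, top-to-bottom) orderings of all rows and columns are
simple: for every row the partial sums at filled positions are pairwise distinct
modulo `M`, and likewise for every column.  Positions are listed by the natural
number representatives `0, 1, …, n-1` of the indices. -/
def NatOrdSimple (n : ℕ) (M : ℤ) (A : ZMod n → ZMod n → ℤ) : Prop :=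
  (∀ a : ZMod n, ∀ t₁ < n, ∀ t₂ < n,
    A a (t₁ : ZMod n) ≠ 0 → A a (t₂ : ZMod n) ≠ 0 →
    (∑ x ∈ Finset.range (t₁ + 1), A a (x : ZMod n)) ≡
      (∑ x ∈ Finset.range (t₂ + 1), A a (x : ZMod n)) [ZMOD M] → t₁ = t₂) ∧
  (∀ b : ZMod n, ∀ t₁ < n, ∀ t₂ < n,
    A (t₁ : ZMod n) b ≠ 0 → A (t₂ : ZMod n) b ≠ 0 →
    (∑ x ∈ Finset.range (t₁ + 1), A (x : ZMod n) b) ≡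
      (∑ x ∈ Finset.range (t₂ + 1), A (x : ZMod n) b) [ZMOD M] → t₁ = t₂)

/-- `σ` is a composition of disjoint cycles, one for each row: it preserves rows,
fixes empty cells, and acts transitively on the filled cells of each row. -/
def IsRowOrdSq (n : ℕ) (A : ZMod n → ZMod n → ℤ)
    (σ : Equiv.Perm (ZMod n × ZMod n)) : Prop :=
  (∀ c, (σ c).1 = c.1) ∧ (∀ c, A c.1 c.2 = 0 → σ c = c) ∧
  (∀ c c' : ZMod n × ZMod n, c.1 = c'.1 → A c.1 c.2 ≠ 0 → A c'.1 c'.2 ≠ 0 →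
    ∃ e : ℕ, (σ ^ e) c = c')

/-- `σ` is a composition of disjoint cycles, one for each column. -/
def IsColOrdSq (n : ℕ) (A : ZMod n → ZMod n → ℤ)
    (σ : Equiv.Perm (ZMod n × ZMod n)) : Prop :=
  (∀ c, (σ c).2 = c.2) ∧ (∀ c, A c.1 c.2 = 0 → σ c = c) ∧
  (∀ c c' : ZMod n × ZMod n, c.2 = c'.2 → A c.1 c.2 ≠ 0 → A c'.1 c'.2 ≠ 0 →
    ∃ e : ℕ, (σ ^ e) c = c')

/-- The cyclic ordering determined by `σ` (on the rows, resp. columns, of a square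
Heffter array `H(n;k)`) is simple: starting from any filled cell, the `k` successive
partial sums along the cycle are pairwise distinct modulo `2nk+1`. -/
def OrdSimple (n k : ℕ) (A : ZMod n → ZMod n → ℤ)
    (σ : Equiv.Perm (ZMod n × ZMod n)) : Prop :=
  ∀ c : ZMod n × ZMod n, A c.1 c.2 ≠ 0 → ∀ t₁ < k, ∀ t₂ < k,
    (∑ j ∈ Finset.range (t₁ + 1), A ((σ ^ j) c).1 ((σ ^ j) c).2) ≡
      (∑ j ∈ Finset.range (t₂ + 1), A ((σ ^ j) c).1 ((σ ^ j) c).2)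
        [ZMOD (2 * n * k + 1)] → t₁ = t₂

/-- Compatibility: `ω_r ∘ ω_c` (apply `ω_r` first, then `ω_c`, following the paper's
convention) is a single cycle on the `nk` filled cells. -/
def CompatibleSq (n : ℕ) (A : ZMod n → ZMod n → ℤ)
    (ωr ωc : Equiv.Perm (ZMod n × ZMod n)) : Prop :=
  ∀ c c' : ZMod n × ZMod n, A c.1 c.2 ≠ 0 → A c'.1 c'.2 ≠ 0 →
    ∃ e : ℕ, ((ωr.trans ωc) ^ e) c = c'

/-!
Parametrize the filled cells by `(h, i) ∈ Fin k × ZMod n`, the cell `(i + g h, i)` of the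
diagonal `D_{g h}` in column `i`. In every row, moving from diagonal `h` to `h - 1` is moving
right to the next filled cell, and in every column moving from `h` to `h + 1` is moving down;
take these cyclic orders, except in column `0`, which is read upwards.

Since every row and column sums to `0`, the partial sums of a cyclic rotation of the natural
order are the natural prefix sums at the filled cells up to a common shift (and, for the reversed
column, a sign), so global simplicity makes all these orderings simple.

Applying the row ordering and then the column ordering sends `(h, i)` to `(h, i + s_h)`, unless
`i + s_h = 0`, in which case it goes to `(h - 2, 0)`. As `s_h` is a unit of `ZMod n`, the orbit of
`(h, 0)` runs through the whole diagonal `h` and then reaches `(h - 2, 0)`; as `k` is odd,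
`h ↦ h - 2` is transitive on `Fin k`, so the composition is a single cycle.
-/

open Finset Fin.CommRing

section FinLemmas

variable {k : ℕ} [NeZero k]

lemma Fin.val_add_one_eq_ite (h : Fin k) :
    (h + 1).val = if h.val + 1 = k then 0 else h.val + 1 := by
  have := h.isLt
  rw [Fin.val_add, Fin.val_one']
  rcases Nat.lt_or_ge k 2 with hk | hk
  · obtain rfl : k = 1 := by have := NeZero.ne k; omega
    simp
  rw [Nat.mod_eq_of_lt (by omega : 1 < k)]
  split_ifs with hk'
  · rw [hk', Nat.mod_self]
  · exact Nat.mod_eq_of_lt (by omega)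

lemma Fin.natCast_inj_of_lt {t₁ t₂ : ℕ} (h₁ : t₁ < k) (h₂ : t₂ < k)
    (h : (t₁ : Fin k) = t₂) : t₁ = t₂ := by
  simpa [Fin.ext_iff, Nat.mod_eq_of_lt h₁, Nat.mod_eq_of_lt h₂] using h

lemma Fin.self_ne_add_one (hk : 2 ≤ k) (h : Fin k) : h ≠ h + 1 := fun e => by
  have := congrArg Fin.val e
  rw [Fin.val_add_one_eq_ite] at this
  split_ifs at this <;> omega

lemma Fin.exists_two_mul_eq (hk : Odd k) (c : Fin k) :
    ∃ e : ℕ, 2 * (e : Fin k) = c := by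
  obtain ⟨m, hm⟩ := hk
  refine ⟨(m + 1) * c.val, ?_⟩
  have hk0 : ((2 * m + 1 : ℕ) : Fin k) = 0 := by rw [← hm, Fin.natCast_self]
  calc (2 : Fin k) * ((m + 1) * c.val : ℕ)
      = (((2 * m + 1 : ℕ) : Fin k) + 1) * c := by push_cast [Fin.cast_val_eq_self]; ring
    _ = c := by rw [hk0, zero_add, one_mul]

end FinLemmas

namespace Heffter

lemma val_natCast_sub_natCast {n x y : ℕ} (hx : x < n) (hy : y < n) :
    ((x : ZMod n) - y).val = if y ≤ x then x - y else x + n - y := by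
  split_ifs with h
  · rw [← Nat.cast_sub h, ZMod.val_natCast_of_lt (by omega)]
  · have e : (x : ZMod n) - y = ((x + n - y : ℕ) : ZMod n) := by
      rw [Nat.cast_sub (by omega), Nat.cast_add, ZMod.natCast_self, add_zero]
    rw [e, ZMod.val_natCast_of_lt (by omega)]

section PrefixSum

variable {n : ℕ} [NeZero n]

lemma val_sub_lt_val_of_val_lt_val_add {a b : ZMod n} (ha : 0 < a.val)
    (hab : a.val < (a + b).val) : 0 < b.val ∧ b.val < (a + b).val := by
  rw [show b = (a + b) - a by ring, ZMod.val_sub hab.le, add_sub_cancel_left]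
  omega

lemma sum_range_natCast_eq_sum_univ {β : Type*} [AddCommMonoid β] (f : ZMod n → β) :
    ∑ x ∈ range n, f x = ∑ x, f x := by
  refine sum_nbij (↑) (by simp) (fun a ha b hb hab => ?_) (fun x _ => ?_) (fun _ _ => rfl)
  · rw [coe_range, Set.mem_Iio] at ha hb
    rw [← ZMod.val_natCast_of_lt ha, ← ZMod.val_natCast_of_lt hb, hab]
  · exact ⟨x.val, by simp [ZMod.val_lt], ZMod.natCast_zmod_val x⟩

def prefixSum (v : ZMod n → ℤ) (x : ZMod n) : ℤ :=
  ∑ y ∈ range (x.val + 1), v y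

lemma modEq_prefixSum_sub {M : ℤ} {v : ZMod n → ℤ} (hv : ∑ x, v x ≡ 0 [ZMOD M])
    {p q : ZMod n} (hpq : p ≠ q)
    (hgap : ∀ y : ZMod n, 0 < (y - p).val → (y - p).val < (q - p).val → v y = 0) :
    v q ≡ prefixSum v q - prefixSum v p [ZMOD M] := by
  have hp := ZMod.val_lt p
  have hq := ZMod.val_lt q
  have hval : ∀ y < n, ((y : ZMod n) - p).val =
      if p.val ≤ y then y - p.val else y + n - p.val := fun y hy => by
    rw [← val_natCast_sub_natCast hy hp, ZMod.natCast_zmod_val]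
  have hqp := hval q.val hq
  rw [ZMod.natCast_zmod_val] at hqp
  have hpq' : p.val ≠ q.val := fun h => hpq (ZMod.val_injective n h)
  have hzero : ∀ y ∈ range n,
      (p.val < y ∧ y < q.val) ∨ (q.val < p.val ∧ (p.val < y ∨ y < q.val)) → v y = 0 :=
    fun y hy hbetween => by
      rw [mem_range] at hy
      apply hgap <;> simp only [hval y hy, hqp] <;> split_ifs <;> omega
  have hvq : v q = v (q.val : ℕ) := by rw [ZMod.natCast_zmod_val]
  rcases lt_or_gt_of_ne hpq' with hlt | hgt
  · have hdiff : prefixSum v q - prefixSum v p = v q := by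
      rw [prefixSum, prefixSum, ← sum_range_add_sum_Ico _ (by omega : p.val + 1 ≤ q.val + 1),
        add_sub_cancel_left, sum_Ico_succ_top (by omega), hvq, add_eq_right]
      exact sum_eq_zero fun y hy => hzero y (by simp at hy ⊢; omega) (by simp at hy; omega)
    rw [hdiff]
  · have hPq : prefixSum v q = v q := by
      rw [prefixSum, sum_range_succ, hvq, add_eq_right]
      exact sum_eq_zero fun y hy => hzero y (by simp at hy ⊢; omega) (by simp at hy; omega)
    have hPp : prefixSum v p = ∑ x, v x := by
      rw [← sum_range_natCast_eq_sum_univ, prefixSum, ← sum_range_add_sum_Ico _ hp,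
        left_eq_add]
      exact sum_eq_zero fun y hy => hzero y (by simp at hy ⊢; omega) (by simp at hy; omega)
    rw [hPq, hPp]
    simpa using (Int.ModEq.refl (v q)).sub hv.symm

end PrefixSum

lemma sum_range_modEq_sub {M : ℤ} {e f : ℕ → ℤ} (he : ∀ j, e j ≡ f (j + 1) - f j [ZMOD M])
    (t : ℕ) : ∑ j ∈ range t, e j ≡ f t - f 0 [ZMOD M] := by
  rw [← sum_range_sub]
  exact Int.ModEq.sum fun j _ => he j

lemma eq_of_sum_range_modEq {M : ℤ} {k : ℕ} {e f : ℕ → ℤ}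
    (he : ∀ j, e j ≡ f (j + 1) - f j [ZMOD M])
    (hf : ∀ t₁ < k, ∀ t₂ < k, f (t₁ + 1) ≡ f (t₂ + 1) [ZMOD M] → t₁ = t₂) :
    ∀ t₁ < k, ∀ t₂ < k,
      ∑ j ∈ range (t₁ + 1), e j ≡ ∑ j ∈ range (t₂ + 1), e j [ZMOD M] → t₁ = t₂ :=
  fun t₁ h₁ t₂ h₂ hsum => hf t₁ h₁ t₂ h₂ <| by
    simpa using (((sum_range_modEq_sub he _).symm.trans hsum).trans
      (sum_range_modEq_sub he _)).add_right (f 0)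

lemma two_le_of_isHeffterSq {n k : ℕ} [NeZero n] [NeZero k] {A : ZMod n → ZMod n → ℤ}
    (hA : IsHeffterSq n k A) : 2 ≤ k := by
  by_contra hk
  obtain rfl : k = 1 := by have := NeZero.ne k; omega
  obtain ⟨b, hb⟩ := card_eq_one.mp (hA.1 0)
  have hmem : ∀ b', A 0 b' ≠ 0 ↔ b' = b := fun b' => by
    simpa using congrArg (b' ∈ ·) hb
  have hsum : ∑ b', A 0 b' = A 0 b :=
    Fintype.sum_eq_single b fun b' hb' => not_not.mp (mt (hmem b').mp hb')
  have hne : A 0 b ≠ 0 := (hmem b).mpr rfl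
  have hle := mem_Icc.mp (hA.2.2.2.2.1 0 b hne)
  have hdvd := Int.modEq_zero_iff_dvd.mp (hsum ▸ hA.2.2.1 0)
  -- a single nonzero entry of a row cannot vanish modulo `2n + 1` (it is at most `n` in size)
  refine hne (Int.eq_zero_of_dvd_of_natAbs_lt_natAbs hdvd ?_)
  omega

section SingleCycle

variable {n k : ℕ} [NeZero k] {s : Fin k → ZMod n} {ρ : Equiv.Perm (Fin k × ZMod n)}

lemma pow_apply_mk_zero (hs : ∀ h, IsUnit (s h))
    (hρ : ∀ h i, ρ (h, i) = (if i + s h = 0 then h - 2 else h, i + s h))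
    (h : Fin k) {m : ℕ} (hm : m < n) : (ρ ^ m) (h, 0) = (h, m * s h) := by
  induction m with
  | zero => simp
  | succ m ih =>
    have hne : ((m + 1 : ℕ) : ZMod n) * s h ≠ 0 := by
      rw [ne_eq, (hs h).mul_left_eq_zero, ZMod.natCast_eq_zero_iff]
      exact Nat.not_dvd_of_pos_of_lt m.succ_pos hm
    rw [pow_succ', Equiv.Perm.mul_apply, ih (by omega), hρ, ← add_one_mul, ← Nat.cast_add_one,
      if_neg hne]

lemma sameCycle_of_apply_eq [NeZero n] (hk : Odd k) (hs : ∀ h, IsUnit (s h))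
    (hρ : ∀ h i, ρ (h, i) = (if i + s h = 0 then h - 2 else h, i + s h))
    (x y : Fin k × ZMod n) : ρ.SameCycle x y := by
  have hwrap : ∀ h, ρ.SameCycle (h, 0) (h - 2, 0) := fun h => by
    have hn : n - 1 + 1 = n := Nat.sub_add_cancel NeZero.one_le
    have hzero : ((n - 1 : ℕ) : ZMod n) * s h + s h = 0 := by
      rw [← add_one_mul, ← Nat.cast_add_one, hn, ZMod.natCast_self, zero_mul]
    have hρn : ρ ^ n = ρ * ρ ^ (n - 1) := by rw [← pow_succ', hn]
    refine ⟨n, ?_⟩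
    rw [zpow_natCast, hρn, Equiv.Perm.mul_apply, pow_apply_mk_zero hs hρ h (by omega), hρ,
      if_pos hzero, hzero]
  have halong : ∀ h i, ρ.SameCycle (h, 0) (h, i) := fun h i => by
    obtain ⟨u, hu⟩ := hs h
    refine ⟨(i * ↑u⁻¹).val, ?_⟩
    rw [zpow_natCast, pow_apply_mk_zero hs hρ h (ZMod.val_lt _), ZMod.natCast_zmod_val, ← hu,
      mul_assoc, Units.inv_mul, mul_one]
  have hacross : ∀ h (e : ℕ), ρ.SameCycle (h, 0) (h - 2 * e, 0) := fun h e => by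
    induction e with
    | zero => simpa using Equiv.Perm.SameCycle.refl _ _
    | succ e ih =>
      rw [show h - 2 * ((e + 1 : ℕ) : Fin k) = h - 2 * e - 2 by push_cast; ring]
      exact ih.trans (hwrap _)
  obtain ⟨h, i⟩ := x
  obtain ⟨h', i'⟩ := y
  obtain ⟨e, he⟩ := Fin.exists_two_mul_eq hk (h - h')
  have hhh' := hacross h e
  rw [he, sub_sub_cancel] at hhh'
  exact (halong h i).symm.trans (hhh'.trans (halong h' i'))

end SingleCycle

section Diagonals

variable {n k : ℕ} {g : Fin k → ℕ}

lemma diag_injective (hmono : StrictMono g) (hgn : ∀ h, g h < n) :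
    Function.Injective fun h => (g h : ZMod n) := fun a b hab =>
  hmono.injective (by simpa [ZMod.val_natCast_of_lt (hgn _)] using congrArg ZMod.val hab)

variable [NeZero k]

/-- No diagonal lies strictly inside the cyclic arc from `g h` to `g (h + 1)`. -/
lemma not_lt_val_diag_sub (hmono : StrictMono g) (hgn : ∀ h, g h < n) (h j : Fin k)
    (hj : 0 < ((g j : ZMod n) - g h).val) :
    ¬ ((g j : ZMod n) - g h).val < ((g (h + 1) : ZMod n) - g h).val := by
  have cmp : ∀ p q : Fin k, (g p < g q ∧ p.val < q.val) ∨ (g p = g q ∧ p.val = q.val) ∨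
      (g q < g p ∧ q.val < p.val) := fun p q => by
    rcases lt_trichotomy p q with hpq | rfl | hpq
    exacts [Or.inl ⟨hmono hpq, hpq⟩, Or.inr (Or.inl ⟨rfl, rfl⟩),
      Or.inr (Or.inr ⟨hmono hpq, hpq⟩)]
  have := Fin.val_add_one_eq_ite h
  have := cmp j h; have := cmp j (h + 1); have := cmp h (h + 1)
  have := j.isLt; have := hgn h; have := hgn j; have := hgn (h + 1)
  rw [val_natCast_sub_natCast (hgn _) (hgn _)] at hj ⊢
  rw [val_natCast_sub_natCast (hgn _) (hgn _)]
  split_ifs at * <;> omega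

end Diagonals

section Cells

variable {n k : ℕ}

def diagCell (g : Fin k → ℕ) (x : Fin k × ZMod n) : ZMod n × ZMod n :=
  (x.2 + g x.1, x.2)

def OnDiagonals (g : Fin k → ℕ) (c : ZMod n × ZMod n) : Prop :=
  ∃ h, c.1 - c.2 = (g h : ZMod n)

variable {g : Fin k → ℕ}

instance : DecidablePred (OnDiagonals (n := n) g) :=
  fun _ => inferInstanceAs (Decidable (∃ _, _))

lemma exists_diagCell_eq {c : ZMod n × ZMod n} (hc : OnDiagonals g c) :
    ∃ x, diagCell g x = c := by
  obtain ⟨h, hh⟩ := hc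
  exact ⟨(h, c.2), Prod.ext (by simp [diagCell, ← hh]) rfl⟩

lemma diagCell_injective (hg : Function.Injective fun h => (g h : ZMod n)) :
    Function.Injective (diagCell (n := n) g) := fun x y hxy => by
  obtain ⟨h1, h2 : x.2 = y.2⟩ := Prod.ext_iff.mp hxy
  rw [diagCell, diagCell, h2] at h1
  exact Prod.ext (hg (add_left_cancel h1)) h2

noncomputable def diagEquiv (hg : Function.Injective fun h => (g h : ZMod n)) :
    Fin k × ZMod n ≃ {c : ZMod n × ZMod n // OnDiagonals g c} :=
  Equiv.ofBijective (fun x => ⟨diagCell g x, x.1, by simp [diagCell]⟩)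
    ⟨fun x y hxy => diagCell_injective hg (congrArg Subtype.val hxy),
     fun c => (exists_diagCell_eq c.2).imp fun _ hx => Subtype.ext hx⟩

lemma extendDomain_pow_apply_diagCell (hg : Function.Injective fun h => (g h : ZMod n))
    (σ : Equiv.Perm (Fin k × ZMod n)) (j : ℕ) (x : Fin k × ZMod n) :
    ((σ.extendDomain (diagEquiv hg)) ^ j) (diagCell g x) = diagCell g ((σ ^ j) x) := by
  rw [← Equiv.Perm.extendDomain_pow]
  exact Equiv.Perm.extendDomain_apply_image _ _ x

variable [NeZero k]

def rowStep (g : Fin k → ℕ) : Equiv.Perm (Fin k × ZMod n) where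
  toFun x := (x.1 - 1, x.2 + g x.1 - g (x.1 - 1))
  invFun x := (x.1 + 1, x.2 - g (x.1 + 1) + g x.1)
  left_inv x := Prod.ext (sub_add_cancel _ _) (by simp only [sub_add_cancel]; ring)
  right_inv x := Prod.ext (add_sub_cancel_right _ _) (by simp only [add_sub_cancel_right]; ring)

def colStep : Equiv.Perm (Fin k × ZMod n) where
  toFun x := (if x.2 = 0 then x.1 - 1 else x.1 + 1, x.2)
  invFun x := (if x.2 = 0 then x.1 + 1 else x.1 - 1, x.2)
  left_inv x := by by_cases hx : x.2 = 0 <;> simp [hx, Prod.ext_iff]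
  right_inv x := by by_cases hx : x.2 = 0 <;> simp [hx, Prod.ext_iff]

lemma rowStep_pow_apply (j : ℕ) (h : Fin k) (i : ZMod n) :
    (rowStep g ^ j : Equiv.Perm (Fin k × ZMod n)) (h, i) = (h - j, i + g h - g (h - j)) := by
  induction j with
  | zero => simp
  | succ j ih =>
    rw [pow_succ', Equiv.Perm.mul_apply, ih]
    refine Prod.ext ?_ ?_ <;> simp [rowStep, sub_sub]

lemma colStep_pow_apply_of_ne (j : ℕ) (h : Fin k) {i : ZMod n} (hi : i ≠ 0) :
    (colStep ^ j) (h, i) = (h + j, i) := by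
  induction j with
  | zero => simp
  | succ j ih =>
    rw [pow_succ', Equiv.Perm.mul_apply, ih]
    simp [colStep, hi, add_assoc]

lemma colStep_pow_apply_zero (j : ℕ) (h : Fin k) :
    (colStep ^ j) ((h, 0) : Fin k × ZMod n) = (h - j, 0) := by
  induction j with
  | zero => simp
  | succ j ih =>
    rw [pow_succ', Equiv.Perm.mul_apply, ih]
    simp [colStep, sub_sub]

lemma colStep_mul_rowStep_apply (h : Fin k) (i : ZMod n) :
    (colStep * rowStep g : Equiv.Perm (Fin k × ZMod n)) (h, i) =
      (if i + (g h - g (h - 1)) = 0 then h - 2 else h, i + (g h - g (h - 1))) := by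
  simp only [Equiv.Perm.mul_apply, rowStep, colStep, Equiv.coe_fn_mk, add_sub_assoc]
  split_ifs <;> refine Prod.ext ?_ rfl <;> ring

noncomputable def rowPerm (hg : Function.Injective fun h => (g h : ZMod n)) :
    Equiv.Perm (ZMod n × ZMod n) :=
  (rowStep g).extendDomain (diagEquiv hg)

noncomputable def colPerm (hg : Function.Injective fun h => (g h : ZMod n)) :
    Equiv.Perm (ZMod n × ZMod n) :=
  colStep.extendDomain (diagEquiv hg)

variable (hg : Function.Injective fun h => (g h : ZMod n))

lemma rowPerm_pow_diagCell (j : ℕ) (h : Fin k) (i : ZMod n) :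
    (rowPerm hg ^ j) (diagCell g (h, i)) = (i + g h, i + g h - g (h - j)) := by
  rw [rowPerm, extendDomain_pow_apply_diagCell, rowStep_pow_apply, diagCell, sub_add_cancel]

lemma colPerm_pow_diagCell_of_ne (j : ℕ) (h : Fin k) {i : ZMod n} (hi : i ≠ 0) :
    (colPerm hg ^ j) (diagCell g (h, i)) = (i + g (h + j), i) := by
  rw [colPerm, extendDomain_pow_apply_diagCell, colStep_pow_apply_of_ne _ _ hi, diagCell]

lemma colPerm_pow_diagCell_zero (j : ℕ) (h : Fin k) :
    (colPerm hg ^ j) (diagCell g (h, 0)) = ((g (h - j) : ZMod n), 0) := by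
  rw [colPerm, extendDomain_pow_apply_diagCell, colStep_pow_apply_zero, diagCell, zero_add]

lemma isRowOrdSq_rowPerm {A : ZMod n → ZMod n → ℤ}
    (hfill : ∀ c : ZMod n × ZMod n, A c.1 c.2 ≠ 0 ↔ OnDiagonals g c) :
    IsRowOrdSq n A (rowPerm hg) := by
  refine ⟨fun c => ?_, fun c hc => ?_, fun c c' hcc' hc hc' => ?_⟩
  · by_cases hc : OnDiagonals g c
    · obtain ⟨⟨h, i⟩, rfl⟩ := exists_diagCell_eq hc
      rw [← pow_one (rowPerm hg), rowPerm_pow_diagCell]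
      rfl
    · rw [rowPerm, Equiv.Perm.extendDomain_apply_not_subtype _ _ hc]
  · exact Equiv.Perm.extendDomain_apply_not_subtype _ _ fun h => (hfill c).mpr h hc
  · obtain ⟨⟨h, i⟩, rfl⟩ := exists_diagCell_eq ((hfill c).mp hc)
    obtain ⟨⟨h', i'⟩, rfl⟩ := exists_diagCell_eq ((hfill c').mp hc')
    refine ⟨(h - h').val, ?_⟩
    rw [rowPerm_pow_diagCell, Fin.cast_val_eq_self, sub_sub_cancel,
      show i + g h = i' + g h' from hcc', add_sub_cancel_right]
    rfl

lemma isColOrdSq_colPerm {A : ZMod n → ZMod n → ℤ}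
    (hfill : ∀ c : ZMod n × ZMod n, A c.1 c.2 ≠ 0 ↔ OnDiagonals g c) :
    IsColOrdSq n A (colPerm hg) := by
  refine ⟨fun c => ?_, fun c hc => ?_, fun c c' hcc' hc hc' => ?_⟩
  · by_cases hc : OnDiagonals g c
    · obtain ⟨⟨h, i⟩, rfl⟩ := exists_diagCell_eq hc
      rw [← pow_one (colPerm hg), colPerm, extendDomain_pow_apply_diagCell]
      rfl
    · rw [colPerm, Equiv.Perm.extendDomain_apply_not_subtype _ _ hc]
  · exact Equiv.Perm.extendDomain_apply_not_subtype _ _ fun h => (hfill c).mpr h hc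
  · obtain ⟨⟨h, i⟩, rfl⟩ := exists_diagCell_eq ((hfill c).mp hc)
    obtain ⟨⟨h', i'⟩, rfl⟩ := exists_diagCell_eq ((hfill c').mp hc')
    obtain rfl : i = i' := hcc'
    by_cases hi : i = 0
    · subst hi
      refine ⟨(h - h').val, ?_⟩
      rw [colPerm_pow_diagCell_zero, Fin.cast_val_eq_self, sub_sub_cancel]
      simp [diagCell]
    · refine ⟨(h' - h).val, ?_⟩
      rw [colPerm_pow_diagCell_of_ne _ _ _ hi, Fin.cast_val_eq_self, add_sub_cancel]
      rfl

end Cells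

section Orderings

variable {n k : ℕ} [NeZero n] [NeZero k] {g : Fin k → ℕ} {A : ZMod n → ZMod n → ℤ} {M : ℤ}
  {hg : Function.Injective fun h => (g h : ZMod n)}

lemma modEq_prefixSum_row (hmono : StrictMono g) (hgn : ∀ h, g h < n) (hk : 2 ≤ k)
    (hfill : ∀ c : ZMod n × ZMod n, A c.1 c.2 ≠ 0 ↔ OnDiagonals g c) {a : ZMod n}
    (hrow : ∑ b, A a b ≡ 0 [ZMOD M]) (h : Fin k) :
    A a (a - g h) ≡ prefixSum (A a) (a - g h) - prefixSum (A a) (a - g (h + 1)) [ZMOD M] := by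
  refine modEq_prefixSum_sub hrow (fun e => ?_) fun y hy₀ hy => ?_
  · exact Fin.self_ne_add_one hk h (diag_injective hmono hgn (sub_right_injective e)).symm
  · by_contra hne
    obtain ⟨j, hj⟩ := (hfill (a, y)).mp hne
    obtain rfl : y = a - g j := by rw [← hj, sub_sub_cancel]
    have hsplit : (g (h + 1) - g h : ZMod n) = (g (h + 1) - g j) + (g j - g h) :=
      (sub_add_sub_cancel _ _ _).symm
    rw [sub_sub_sub_cancel_left] at hy₀
    rw [sub_sub_sub_cancel_left, sub_sub_sub_cancel_left, hsplit] at hy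
    have hjh := val_sub_lt_val_of_val_lt_val_add hy₀ hy
    rw [← hsplit] at hjh
    exact not_lt_val_diag_sub hmono hgn h j hjh.1 hjh.2

lemma modEq_prefixSum_col (hmono : StrictMono g) (hgn : ∀ h, g h < n) (hk : 2 ≤ k)
    (hfill : ∀ c : ZMod n × ZMod n, A c.1 c.2 ≠ 0 ↔ OnDiagonals g c) {b : ZMod n}
    (hcol : ∑ a, A a b ≡ 0 [ZMOD M]) (h : Fin k) :
    A (b + g h) b ≡
      prefixSum (A · b) (b + g h) - prefixSum (A · b) (b + g (h - 1)) [ZMOD M] := by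
  refine modEq_prefixSum_sub hcol (fun e => ?_) fun y hy₀ hy => ?_
  · refine Fin.self_ne_add_one hk (h - 1) ?_
    rw [sub_add_cancel]
    exact diag_injective hmono hgn (add_left_cancel e)
  · by_contra hne
    obtain ⟨j, hj⟩ := (hfill (y, b)).mp hne
    obtain rfl : y = b + g j := by rw [← hj, add_sub_cancel]
    rw [add_sub_add_left_eq_sub, add_sub_add_left_eq_sub] at hy
    rw [add_sub_add_left_eq_sub] at hy₀
    have := not_lt_val_diag_sub hmono hgn (h - 1) j hy₀
    rw [sub_add_cancel] at this
    exact this hy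

lemma NatOrdSimple.eq_of_prefixSum_row (hs : NatOrdSimple n M A) {a x y : ZMod n}
    (hx : A a x ≠ 0) (hy : A a y ≠ 0)
    (hxy : prefixSum (A a) x ≡ prefixSum (A a) y [ZMOD M]) : x = y :=
  ZMod.val_injective n <| hs.1 a _ x.val_lt _ y.val_lt
    (by rwa [ZMod.natCast_zmod_val]) (by rwa [ZMod.natCast_zmod_val]) hxy

lemma NatOrdSimple.eq_of_prefixSum_col (hs : NatOrdSimple n M A) {b x y : ZMod n}
    (hx : A x b ≠ 0) (hy : A y b ≠ 0)
    (hxy : prefixSum (A · b) x ≡ prefixSum (A · b) y [ZMOD M]) : x = y :=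
  ZMod.val_injective n <| hs.2 b _ x.val_lt _ y.val_lt
    (by rwa [ZMod.natCast_zmod_val]) (by rwa [ZMod.natCast_zmod_val]) hxy

lemma ordSimple_rowPerm (hmono : StrictMono g) (hgn : ∀ h, g h < n) (hk : 2 ≤ k)
    (hfill : ∀ c : ZMod n × ZMod n, A c.1 c.2 ≠ 0 ↔ OnDiagonals g c)
    (hrows : ∀ a, ∑ b, A a b ≡ 0 [ZMOD (2 * n * k + 1)])
    (hs : NatOrdSimple n (2 * n * k + 1) A) :
    OrdSimple n k A (rowPerm hg) := by
  intro c hc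
  obtain ⟨⟨h, i⟩, rfl⟩ := exists_diagCell_eq ((hfill c).mp hc)
  simp only [rowPerm_pow_diagCell]
  set a : ZMod n := i + g h
  have hnz : ∀ j : Fin k, A a (a - g j) ≠ 0 := fun j =>
    (hfill (a, _)).mpr ⟨j, sub_sub_cancel _ _⟩
  refine eq_of_sum_range_modEq (f := fun j : ℕ => prefixSum (A a) (a - g (h + 1 - j)))
    (fun j => ?_) fun t₁ h₁ t₂ h₂ ht => ?_
  · rw [show h + 1 - ((j + 1 : ℕ) : Fin k) = h - j by push_cast; ring,
      ← show h - j + 1 = h + 1 - j by ring]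
    exact modEq_prefixSum_row hmono hgn hk hfill (hrows a) (h - j)
  · simp only [Nat.cast_add_one, add_sub_add_right_eq_sub] at ht
    exact Fin.natCast_inj_of_lt h₁ h₂ <| sub_right_injective <| diag_injective hmono hgn <|
      sub_right_injective <| NatOrdSimple.eq_of_prefixSum_row hs (hnz _) (hnz _) ht

lemma ordSimple_colPerm (hmono : StrictMono g) (hgn : ∀ h, g h < n) (hk : 2 ≤ k)
    (hfill : ∀ c : ZMod n × ZMod n, A c.1 c.2 ≠ 0 ↔ OnDiagonals g c)
    (hcols : ∀ b, ∑ a, A a b ≡ 0 [ZMOD (2 * n * k + 1)])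
    (hs : NatOrdSimple n (2 * n * k + 1) A) :
    OrdSimple n k A (colPerm hg) := by
  intro c hc
  obtain ⟨⟨h, i⟩, rfl⟩ := exists_diagCell_eq ((hfill c).mp hc)
  have hnz : ∀ j : Fin k, A (i + g j) i ≠ 0 := fun j =>
    (hfill (_, i)).mpr ⟨j, add_sub_cancel_left _ _⟩
  have hstep := modEq_prefixSum_col hmono hgn hk hfill (hcols i)
  have hinj : ∀ j j' : Fin k, prefixSum (A · i) (i + g j) ≡ prefixSum (A · i) (i + g j')
      [ZMOD (2 * n * k + 1)] → j = j' := fun j j' hjj' =>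
    diag_injective hmono hgn <| add_left_cancel <|
      NatOrdSimple.eq_of_prefixSum_col hs (hnz j) (hnz j') hjj'
  by_cases hi : i = 0
  · subst hi
    simp only [colPerm_pow_diagCell_zero]
    simp only [zero_add] at hstep hinj
    -- column `0` is read upwards, so its partial sums are differences taken the other way
    refine eq_of_sum_range_modEq (f := fun j : ℕ => -prefixSum (A · 0) (g (h - j)))
      (fun j => ?_) fun t₁ h₁ t₂ h₂ ht => ?_
    · rw [neg_sub_neg, Nat.cast_add_one, sub_add_eq_sub_sub]
      exact hstep (h - j)
    · simp only [Nat.cast_add_one, sub_add_eq_sub_sub] at ht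
      exact Fin.natCast_inj_of_lt h₁ h₂ <| sub_right_injective <| sub_left_injective <|
        hinj _ _ (by simpa using ht.neg)
  · simp only [colPerm_pow_diagCell_of_ne _ _ _ hi]
    refine eq_of_sum_range_modEq (f := fun j : ℕ => prefixSum (A · i) (i + g (h - 1 + j)))
      (fun j => ?_) fun t₁ h₁ t₂ h₂ ht => ?_
    · rw [Nat.cast_add_one, show h - 1 + (j + 1) = h + j by ring,
        show h - 1 + (j : Fin k) = h + j - 1 by ring]
      exact hstep (h + j)
    · have hshift : ∀ t : Fin k, h - 1 + (t + 1) = h + t := fun t => by ring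
      simp only [Nat.cast_add_one, hshift] at ht
      exact Fin.natCast_inj_of_lt h₁ h₂ (add_right_injective h (hinj _ _ ht))

lemma compatibleSq_rowPerm_colPerm (hk : Odd k)
    (hfill : ∀ c : ZMod n × ZMod n, A c.1 c.2 ≠ 0 ↔ OnDiagonals g c)
    (hunit : ∀ h, IsUnit ((g h : ZMod n) - g (h - 1))) :
    CompatibleSq n A (rowPerm hg) (colPerm hg) := by
  intro c c' hc hc'
  obtain ⟨x, rfl⟩ := exists_diagCell_eq ((hfill c).mp hc)
  obtain ⟨y, rfl⟩ := exists_diagCell_eq ((hfill c').mp hc')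
  have hcomp : (rowPerm hg).trans (colPerm hg) =
      (colStep * rowStep g : Equiv.Perm (Fin k × ZMod n)).extendDomain (diagEquiv hg) := by
    rw [← Equiv.Perm.mul_def, rowPerm, colPerm, Equiv.Perm.extendDomain_mul]
  rw [hcomp]
  exact (Equiv.Perm.sameCycle_extendDomain.mpr
    (sameCycle_of_apply_eq hk hunit colStep_mul_rowStep_apply x y)).exists_nat_pow_eq

end Orderings

end Heffter

open Heffter in
theorem statement1 (n k : ℕ) [NeZero n] [NeZero k] (hk : Odd k)
    (A : ZMod n → ZMod n → ℤ) (hA : IsHeffterSq n k A)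
    (g : Fin k → ℕ) (hmono : StrictMono g) (hgn : ∀ h, g h < n)
    (hfill : ∀ a b : ZMod n, A a b ≠ 0 ↔ ∃ h : Fin k, a - b = (g h : ZMod n))
    (hgcd : ∀ h : Fin k, Int.gcd (n : ℤ) ((g h : ℤ) - (g (h - 1) : ℤ)) = 1)
    (hgs : NatOrdSimple n (2 * n * k + 1) A) :
    ∃ ωr ωc : Equiv.Perm (ZMod n × ZMod n),
      IsRowOrdSq n A ωr ∧ IsColOrdSq n A ωc ∧
      OrdSimple n k A ωr ∧ OrdSimple n k A ωc ∧ CompatibleSq n A ωr ωc := by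
  have hg := diag_injective (n := n) hmono hgn
  have hfill' : ∀ c : ZMod n × ZMod n, A c.1 c.2 ≠ 0 ↔ OnDiagonals g c :=
    fun c => hfill c.1 c.2
  have hk2 := two_le_of_isHeffterSq hA
  have hunit : ∀ h, IsUnit ((g h : ZMod n) - g (h - 1)) := fun h => by
    simpa using (ZMod.coe_int_isUnit_iff_isCoprime _ n).mpr
      (Int.isCoprime_iff_gcd_eq_one.mpr (hgcd h))
  exact ⟨rowPerm hg, colPerm hg, isRowOrdSq_rowPerm hg hfill', isColOrdSq_colPerm hg hfill',
    ordSimple_rowPerm hmono hgn hk2 hfill' hA.2.2.1 hgs,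
    ordSimple_colPerm hmono hgn hk2 hfill' hA.2.2.2.1 hgs,
    compatibleSq_rowPerm_colPerm hk hfill' hunit⟩
end

section
/- Let p ≥ 0 and let n be an odd integer with n ≥ (2p+2)². Assume further that if n ≡ 3 (mod 6) then p ≡ 1 (mod 3). Then there exists an integer α satisfying 2p+2 ≤ α ≤ n−2−2p, gcd(n, α) = 1, gcd(n, α − 2p − 1) = 1 and gcd(n, n − 1 − α − 2p) = 1. -/
/-!
Write `n = d + 2e` with `d = 2p + 1` and take `α = e + a`. Modulo a prime `q ∣ n`, the numbers
`2α`, `2(α - d)` and `2(n - d - α)` are `2a - d`, `2a - 3d` and `-(2a + d)`, and none of them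
vanishes as soon as `q ∣ a ↔ q ∤ d` (since `q ≠ 2`, and `3 ∣ n → 3 ∣ d` takes care of `q = 3`).
Such an `a` is `0` when `gcd(n, d) = 1`, and otherwise the largest divisor of `n` coprime to `d`,
which is at most `n / 3` because `n` is odd; this keeps `α` in the required range.
-/

theorem Int.gcd_natCast_eq_one_of_forall_prime {n : ℕ} {x : ℤ}
    (h : ∀ q : ℕ, q.Prime → q ∣ n → ¬ (q : ℤ) ∣ x) : Int.gcd n x = 1 := by
  rw [Int.gcd_eq_natAbs, Int.natAbs_natCast]
  exact Nat.coprime_of_dvd fun q hq hqn hqx => h q hq hqn (Int.natCast_dvd.mpr hqx)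

theorem not_dvd_add_of_dvd_iff_not_dvd {R : Type*} [NonUnitalRing R] {q u v : R}
    (h : q ∣ u ↔ ¬ q ∣ v) : ¬ q ∣ u + v := by
  intro huv
  by_cases hu : q ∣ u
  · exact h.mp hu ((dvd_add_right hu).mp huv)
  · exact hu ((dvd_add_left (not_not.mp (mt h.mpr hu))).mp huv)

theorem Nat.exists_mul_coprime_of_prime_dvd (d : ℕ) {n : ℕ} (hn : n ≠ 0) :
    ∃ a b, n = a * b ∧ a.Coprime d ∧ ∀ q, q.Prime → q ∣ b → q ∣ d := by
  induction n using Nat.strong_induction_on with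
  | _ n ih =>
    by_cases hnd : n.Coprime d
    · exact ⟨n, 1, (mul_one n).symm, hnd, fun q hq hq1 => absurd (Nat.dvd_one.mp hq1) hq.ne_one⟩
    obtain ⟨q, hq, hqn, hqd⟩ := Nat.Prime.not_coprime_iff_dvd.mp hnd
    obtain ⟨m, rfl⟩ := hqn
    have hm : m ≠ 0 := right_ne_zero_of_mul hn
    obtain ⟨a, b, rfl, had, hb⟩ := ih m (lt_mul_left (Nat.pos_of_ne_zero hm) hq.one_lt) hm
    refine ⟨a, b * q, by ring, had, fun r hr hrbq => ?_⟩
    rcases hr.dvd_mul.mp hrbq with hrb | hrq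
    · exact hb r hr hrb
    · rwa [(Nat.prime_dvd_prime_iff_eq hr hq).mp hrq]

theorem Nat.exists_dvd_iff_not_dvd (d : ℕ) {n : ℕ} (hn : Odd n) :
    ∃ a, 3 * a ≤ n ∧ (n.Coprime d → a = 0) ∧ ∀ q, q.Prime → q ∣ n → (q ∣ a ↔ ¬ q ∣ d) := by
  by_cases hnd : n.Coprime d
  · refine ⟨0, (mul_zero 3).trans_le n.zero_le, fun _ => rfl, fun q hq hqn => ?_⟩
    exact iff_of_true (dvd_zero q) fun hqd =>
      Nat.Prime.not_coprime_iff_dvd.mpr ⟨q, hq, hqn, hqd⟩ hnd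
  obtain ⟨a, b, rfl, had, hb⟩ := Nat.exists_mul_coprime_of_prime_dvd d hn.pos.ne'
  refine ⟨a, ?_, fun h => absurd h hnd, fun q hq hqn => ⟨?_, ?_⟩⟩
  · obtain ⟨q, hq, hqn, hqd⟩ := Nat.Prime.not_coprime_iff_dvd.mp hnd
    have hqb : q ∣ b := (hq.dvd_mul.mp hqn).resolve_left
      fun hqa => Nat.Prime.not_coprime_iff_dvd.mpr ⟨q, hq, hqa, hqd⟩ had
    have hq3 : 3 ≤ q := hq.two_le.lt_of_ne' fun hq2 => hn.not_two_dvd_nat (hq2 ▸ hqn)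
    have hb : 0 < b := Nat.pos_of_ne_zero (right_ne_zero_of_mul hn.pos.ne')
    calc 3 * a ≤ b * a := Nat.mul_le_mul_right a (hq3.trans (Nat.le_of_dvd hb hqb))
      _ = a * b := mul_comm b a
  · exact fun hqa hqd => Nat.Prime.not_coprime_iff_dvd.mpr ⟨q, hq, hqa, hqd⟩ had
  · exact fun hqd => (hq.dvd_mul.mp hqn).resolve_right (mt (hb q hq) hqd)

theorem not_dvd_two_mul_sub_of_dvd_iff_not_dvd {R : Type*} [CommRing R] {q a d : R}
    (hq : Prime q) (h2 : ¬ q ∣ 2) (h3 : q ∣ 3 → q ∣ d) (h : q ∣ a ↔ ¬ q ∣ d) :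
    ¬ q ∣ 2 * a - d ∧ ¬ q ∣ 2 * a - 3 * d ∧ ¬ q ∣ 2 * a + d := by
  have h2a : q ∣ 2 * a ↔ q ∣ a := ⟨fun h => (hq.dvd_mul.mp h).resolve_left h2, (·.mul_left 2)⟩
  have h3d : q ∣ 3 * d ↔ q ∣ d := ⟨fun h => (hq.dvd_mul.mp h).elim h3 id, (·.mul_left 3)⟩
  simp only [sub_eq_add_neg]
  refine ⟨?_, ?_, ?_⟩ <;> apply not_dvd_add_of_dvd_iff_not_dvd <;> simpa [dvd_neg, h2a, h3d] using h

theorem Int.gcd_eq_one_of_dvd_iff_not_dvd {n : ℕ} {d e a : ℤ} (hn : Odd n)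
    (hne : (n : ℤ) = d + 2 * e) (h3 : 3 ∣ n → (3 : ℤ) ∣ d)
    (ha : ∀ q : ℕ, q.Prime → q ∣ n → ((q : ℤ) ∣ a ↔ ¬ (q : ℤ) ∣ d)) :
    Int.gcd n (e + a) = 1 ∧ Int.gcd n (e + a - d) = 1 ∧ Int.gcd n (e - a) = 1 := by
  have key : ∀ q : ℕ, q.Prime → q ∣ n →
      ¬ (q : ℤ) ∣ e + a ∧ ¬ (q : ℤ) ∣ e + a - d ∧ ¬ (q : ℤ) ∣ e - a := by
    intro q hq hqn
    have hq_eq {r : ℕ} (hr : r.Prime) (h : (q : ℤ) ∣ r) : q = r :=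
      (Nat.prime_dvd_prime_iff_eq hq hr).mp (Int.natCast_dvd_natCast.mp h)
    have h2 : ¬ (q : ℤ) ∣ 2 := fun h => hn.not_two_dvd_nat (hq_eq Nat.prime_two h ▸ hqn)
    have h3' : (q : ℤ) ∣ 3 → (q : ℤ) ∣ d := fun h => by
      obtain rfl := hq_eq Nat.prime_three h
      exact h3 hqn
    obtain ⟨hd1, hd2, hd3⟩ :=
      not_dvd_two_mul_sub_of_dvd_iff_not_dvd (Nat.prime_iff_prime_int.mp hq) h2 h3' (ha q hq hqn)
    have hdvd {x w : ℤ} (hx : (q : ℤ) ∣ x) (hw : w = 2 * x - n) : (q : ℤ) ∣ w :=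
      hw ▸ dvd_sub (hx.mul_left 2) (Int.natCast_dvd_natCast.mpr hqn)
    refine ⟨fun h => hd1 (hdvd h ?_), fun h => hd2 (hdvd h ?_),
      fun h => hd3 (dvd_neg.mp (hdvd h ?_))⟩ <;> rw [hne] <;> ring
  exact ⟨Int.gcd_natCast_eq_one_of_forall_prime fun q hq hqn => (key q hq hqn).1,
    Int.gcd_natCast_eq_one_of_forall_prime fun q hq hqn => (key q hq hqn).2.1,
    Int.gcd_natCast_eq_one_of_forall_prime fun q hq hqn => (key q hq hqn).2.2⟩

theorem statement5 (p n : ℕ) (hodd : Odd n) (hn : (2 * p + 2) ^ 2 ≤ n)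
    (h63 : n % 6 = 3 → p % 3 = 1) :
    ∃ α : ℤ, 2 * (p : ℤ) + 2 ≤ α ∧ α ≤ (n : ℤ) - 2 - 2 * (p : ℤ) ∧
      Int.gcd (n : ℤ) α = 1 ∧
      Int.gcd (n : ℤ) (α - 2 * (p : ℤ) - 1) = 1 ∧
      Int.gcd (n : ℤ) ((n : ℤ) - 1 - α - 2 * (p : ℤ)) = 1 := by
  have hn' : 4 * (p * p) + 8 * p + 4 ≤ n := by linarith [hn]
  have hpp := Nat.le_mul_self p
  have hn2 := Nat.odd_iff.mp hodd
  obtain ⟨e, he⟩ : ∃ e, n = 2 * p + 1 + 2 * e := ⟨(n - (2 * p + 1)) / 2, by omega⟩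
  obtain ⟨a, ha3, ha0, ha⟩ := Nat.exists_dvd_iff_not_dvd (2 * p + 1) hodd
  have hbound : 2 * a + 2 * p + 3 ≤ n := by
    rcases Nat.eq_zero_or_pos p with rfl | hp
    · rw [ha0 (Nat.coprime_one_right n)]; omega
    · nlinarith
  have h3 : 3 ∣ n → (3 : ℤ) ∣ 2 * p + 1 := fun h => by
    have := h63 (by omega)
    omega
  obtain ⟨hα, hαd, hnα⟩ := Int.gcd_eq_one_of_dvd_iff_not_dvd (e := e) (a := a) hodd
    (by rw [he]; push_cast; ring) h3 fun q hq hqn => by exact_mod_cast ha q hq hqn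
  refine ⟨e + a, by omega, by omega, hα, by convert hαd using 2; ring, ?_⟩
  convert hnα using 2
  rw [he]; push_cast; ring
end

section
/- Let p > 0, n ≥ 4p, γ > 0, α an integer with 2p−1 ≤ α ≤ n−2p−1 and gcd(α, n) = 1, and let f_I : {0,…,p−1} → {0,…,p−1} and f_J : {0,…,p−2} → {0,…,p−2} be bijections, and let A′ = A′(n,p,γ,α,f_I,f_J). Then for every row a ∈ ℤ_n of A′ and all i ∈ {0,…,p−1}, j ∈ {0,…,p−2}: d_{2i}(r_a) + d_{2i+1}(r_a) = 1, d_{2p+2j+1}(r_a) + d_{2p+2j+2}(r_a) = −1, and d_{2p}(r_a) + d_{2p+α}(r_a) = −1. For every column a ≠ 0: d_{2i}(c_a) + d_{2i+1}(c_a) = −1, d_{2p+2j+1}(c_a) + d_{2p+2j+2}(c_a) = 1, and d_{2p}(c_a) + d_{2p+α}(c_a) = 1. For the column a = 0: d_{2i}(c_0) + d_{2i+1}(c_0) = 2n−1, d_{2p+2j+1}(c_0) + d_{2p+2j+2}(c_0) = −2n+1, and d_{2p}(c_0) + d_{2p+α}(c_0) = −2n+1. -/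
lemma myval_sub_one {n : ℕ} [NeZero n] (v : ZMod n) :
    (((-v - 1).val : ℤ)) + (v.val : ℤ) = (n : ℤ) - 1 := by
  have hv : v.val < n := ZMod.val_lt v
  have h1 : -v - 1 = ((n - (v.val + 1) : ℕ) : ZMod n) := by
    rw [Nat.cast_sub (by omega)]
    simp [ZMod.natCast_val, ZMod.cast_id]
    ring
  rw [h1, ZMod.val_natCast_of_lt (by omega)]
  omega

lemma myval_neg_add {n : ℕ} [NeZero n] (v : ZMod n) (hv : v ≠ 0) :
    (((-v).val : ℤ)) + (v.val : ℤ) = (n : ℤ) := by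
  have hlt : v.val < n := ZMod.val_lt v
  have hpos : 0 < v.val := by
    rcases Nat.eq_zero_or_pos v.val with h | h
    · exact absurd (by simpa [ZMod.val_eq_zero] using h) hv
    · exact h
  have h1 : -v = ((n - v.val : ℕ) : ZMod n) := by
    rw [Nat.cast_sub (by omega)]
    simp [ZMod.natCast_val, ZMod.cast_id]
  rw [h1, ZMod.val_natCast_of_lt (by omega)]
  omega

/-- The array `A′ = A′(n,p,γ,α,f_I,f_J)` of the paper: an `n × n` partially filled
integer array (empty cells represented by `0`), rows and columns indexed by `ZMod n`.
Its filled cells are exactly the diagonals `D_0, …, D_{4p-2}` and `D_{2p+α}`, where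
the diagonal `D_d` consists of the cells `(b+d, b)`; the entry in a cell is determined
by which diagonal `d = (a-b).val` the cell lies on and by the parameter `x ∈ [0,n-1]`
from the paper's parametrisation of that diagonal. -/
def Aent (n p γ α : ℕ) (fI fJ : ℕ → ℕ) (a b : ZMod n) : ℤ :=
  let d : ℕ := (a - b).val
  if d < 2 * p ∧ d % 2 = 0 then
    -- `D_{2i}`, `i = d/2`: entry `(γ+2)n + 4 f_I(i) n - 2x` in cell `(2i-x, -x)`
    ((γ : ℤ) + 2) * (n : ℤ) + 4 * (fI (d / 2) : ℤ) * (n : ℤ) - 2 * (((-b).val : ℕ) : ℤ)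
  else if d < 2 * p ∧ d % 2 = 1 then
    -- `D_{2i+1}`, `i = (d-1)/2`: entry `-γn - 4 f_I(i) n - 1 - 2x` in cell `(2i+1+x, x)`
    -(γ : ℤ) * (n : ℤ) - 4 * (fI ((d - 1) / 2) : ℤ) * (n : ℤ) - 1 - 2 * ((b.val : ℕ) : ℤ)
  else if d = 2 * p then
    -- `D_{2p}`: entry `-(4p+γ)n + 2x` in cell `(2p-αx, -αx)`
    -(4 * (p : ℤ) + (γ : ℤ)) * (n : ℤ) + 2 * (((((α : ZMod n))⁻¹ * (-b)).val : ℕ) : ℤ)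
  else if 2 * p < d ∧ d ≤ 4 * p - 2 ∧ d % 2 = 1 then
    -- `D_{2p+1+2j}`, `j = (d-2p-1)/2`: entry `(4p+γ-6)n - 4 f_J(j) n + 1 + 2x`
    -- in cell `(2p+1+2j-x, -x)`
    (4 * (p : ℤ) + (γ : ℤ) - 6) * (n : ℤ) - 4 * (fJ ((d - (2 * p + 1)) / 2) : ℤ) * (n : ℤ)
      + 1 + 2 * (((-b).val : ℕ) : ℤ)
  else if 2 * p < d ∧ d ≤ 4 * p - 2 ∧ d % 2 = 0 then
    -- `D_{2p+2+2j}`, `j = (d-2p-2)/2`: entry `-(4p+γ-4)n + 4 f_J(j) n + 2x`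
    -- in cell `(2p+2+2j+x, x)`
    -(4 * (p : ℤ) + (γ : ℤ) - 4) * (n : ℤ) + 4 * (fJ ((d - (2 * p + 2)) / 2) : ℤ) * (n : ℤ)
      + 2 * ((b.val : ℕ) : ℤ)
  else if d = 2 * p + α then
    -- `D_{2p+α}`: entry `(4p+γ-2)n + 1 + 2x` in cell `(2p+α+αx, αx)`
    (4 * (p : ℤ) + (γ : ℤ) - 2) * (n : ℤ) + 1 + 2 * (((((α : ZMod n))⁻¹ * b).val : ℕ) : ℤ)
  else 0

/-- `d_d(r_a)`: the entry of `A` in row `a` lying on the diagonal `D_d`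
(`0` if that cell is empty). -/
def diagRow {n : ℕ} (A : ZMod n → ZMod n → ℤ) (a : ZMod n) (d : ℕ) : ℤ :=
  A a (a - (d : ZMod n))

/-- `d_d(c_a)`: the entry of `A` in column `a` lying on the diagonal `D_d`
(`0` if that cell is empty). -/
def diagCol {n : ℕ} (A : ZMod n → ZMod n → ℤ) (a : ZMod n) (d : ℕ) : ℤ :=
  A (a + (d : ZMod n)) a

/-- `Σ(x)` for row `a`: the sum `d_0(r_a) + d_1(r_a) + ⋯ + d_x(r_a)`. -/
def sigmaRow {n : ℕ} (A : ZMod n → ZMod n → ℤ) (a : ZMod n) (x : ℕ) : ℤ :=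
  ∑ d ∈ Finset.range (x + 1), diagRow A a d

/-- `Σ̄(x)` for column `a`: the sum `d_0(c_a) + d_1(c_a) + ⋯ + d_x(c_a)`. -/
def sigmaCol {n : ℕ} (A : ZMod n → ZMod n → ℤ) (a : ZMod n) (x : ℕ) : ℤ :=
  ∑ d ∈ Finset.range (x + 1), diagCol A a d

theorem statement9 (n p γ α : ℕ) (hp : 0 < p) (hn : 4 * p ≤ n) (hγ : 0 < γ)
    (hα1 : 2 * p - 1 ≤ α) (hα2 : α ≤ n - 2 * p - 1) (hgcd : Nat.gcd α n = 1)
    (fI fJ : ℕ → ℕ)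
    (hfI : Set.BijOn fI (Set.Iio p) (Set.Iio p))
    (hfJ : Set.BijOn fJ (Set.Iio (p - 1)) (Set.Iio (p - 1)))
    (A' : ZMod n → ZMod n → ℤ) (hA' : A' = Aent n p γ α fI fJ) :
    (∀ a : ZMod n,
      (∀ i < p, diagRow A' a (2 * i) + diagRow A' a (2 * i + 1) = 1) ∧
      (∀ j < p - 1,
        diagRow A' a (2 * p + 2 * j + 1) + diagRow A' a (2 * p + 2 * j + 2) = -1) ∧
      diagRow A' a (2 * p) + diagRow A' a (2 * p + α) = -1) ∧
    (∀ a : ZMod n, a ≠ 0 →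
      (∀ i < p, diagCol A' a (2 * i) + diagCol A' a (2 * i + 1) = -1) ∧
      (∀ j < p - 1,
        diagCol A' a (2 * p + 2 * j + 1) + diagCol A' a (2 * p + 2 * j + 2) = 1) ∧
      diagCol A' a (2 * p) + diagCol A' a (2 * p + α) = 1) ∧
    ((∀ i < p,
        diagCol A' 0 (2 * i) + diagCol A' 0 (2 * i + 1) = 2 * (n : ℤ) - 1) ∧
      (∀ j < p - 1,
        diagCol A' 0 (2 * p + 2 * j + 1) + diagCol A' 0 (2 * p + 2 * j + 2)
          = -(2 * (n : ℤ)) + 1) ∧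
      diagCol A' 0 (2 * p) + diagCol A' 0 (2 * p + α) = -(2 * (n : ℤ)) + 1) := by
  subst hA'
  have hn0 : 0 < n := by omega
  haveI : NeZero n := ⟨hn0.ne'⟩
  have hα0 : 0 < α := by omega
  have hαn : 2 * p + α < n := by omega
  have hinv : (α : ZMod n) * ((α : ZMod n))⁻¹ = 1 := by
    rw [ZMod.mul_inv_eq_gcd, ZMod.val_natCast]
    have h1 : Nat.gcd (α % n) n = 1 := by
      rw [← Nat.gcd_rec, Nat.gcd_comm]; exact hgcd
    rw [h1]; exact Nat.cast_one
  -- value of the array on each diagonal, parametrised by the column c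
  have hE : ∀ (c : ZMod n) (i : ℕ), i < p →
      Aent n p γ α fI fJ (c + ((2 * i : ℕ) : ZMod n)) c
        = ((γ : ℤ) + 2) * (n : ℤ) + 4 * (fI i : ℤ) * (n : ℤ) - 2 * ((-c).val : ℤ) := by
    intro c i hi
    have hd : (c + ((2 * i : ℕ) : ZMod n) - c).val = 2 * i := by
      rw [add_sub_cancel_left, ZMod.val_natCast_of_lt (by omega)]
    simp only [Aent]
    rw [hd, if_pos ⟨by omega, by omega⟩, show 2 * i / 2 = i from by omega]
  have hO : ∀ (c : ZMod n) (i : ℕ), i < p →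
      Aent n p γ α fI fJ (c + ((2 * i + 1 : ℕ) : ZMod n)) c
        = -(γ : ℤ) * (n : ℤ) - 4 * (fI i : ℤ) * (n : ℤ) - 1 - 2 * (c.val : ℤ) := by
    intro c i hi
    have hd : (c + ((2 * i + 1 : ℕ) : ZMod n) - c).val = 2 * i + 1 := by
      rw [add_sub_cancel_left, ZMod.val_natCast_of_lt (by omega)]
    simp only [Aent]
    rw [hd, if_neg (by omega), if_pos ⟨by omega, by omega⟩,
      show (2 * i + 1 - 1) / 2 = i from by omega]
  have hP : ∀ (c : ZMod n),
      Aent n p γ α fI fJ (c + ((2 * p : ℕ) : ZMod n)) c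
        = -(4 * (p : ℤ) + (γ : ℤ)) * (n : ℤ)
            + 2 * ((((α : ZMod n))⁻¹ * (-c)).val : ℤ) := by
    intro c
    have hd : (c + ((2 * p : ℕ) : ZMod n) - c).val = 2 * p := by
      rw [add_sub_cancel_left, ZMod.val_natCast_of_lt (by omega)]
    simp only [Aent]
    rw [hd, if_neg (by omega), if_neg (by omega), if_pos rfl]
  have hJ1 : ∀ (c : ZMod n) (j : ℕ), j < p - 1 →
      Aent n p γ α fI fJ (c + ((2 * p + 2 * j + 1 : ℕ) : ZMod n)) c
        = (4 * (p : ℤ) + (γ : ℤ) - 6) * (n : ℤ) - 4 * (fJ j : ℤ) * (n : ℤ)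
            + 1 + 2 * ((-c).val : ℤ) := by
    intro c j hj
    have hd : (c + ((2 * p + 2 * j + 1 : ℕ) : ZMod n) - c).val = 2 * p + 2 * j + 1 := by
      rw [add_sub_cancel_left, ZMod.val_natCast_of_lt (by omega)]
    simp only [Aent]
    rw [hd, if_neg (by omega), if_neg (by omega), if_neg (by omega),
      if_pos ⟨by omega, by omega, by omega⟩,
      show (2 * p + 2 * j + 1 - (2 * p + 1)) / 2 = j from by omega]
  have hJ2 : ∀ (c : ZMod n) (j : ℕ), j < p - 1 →
      Aent n p γ α fI fJ (c + ((2 * p + 2 * j + 2 : ℕ) : ZMod n)) c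
        = -(4 * (p : ℤ) + (γ : ℤ) - 4) * (n : ℤ) + 4 * (fJ j : ℤ) * (n : ℤ)
            + 2 * (c.val : ℤ) := by
    intro c j hj
    have hd : (c + ((2 * p + 2 * j + 2 : ℕ) : ZMod n) - c).val = 2 * p + 2 * j + 2 := by
      rw [add_sub_cancel_left, ZMod.val_natCast_of_lt (by omega)]
    simp only [Aent]
    rw [hd, if_neg (by omega), if_neg (by omega), if_neg (by omega), if_neg (by omega),
      if_pos ⟨by omega, by omega, by omega⟩,
      show (2 * p + 2 * j + 2 - (2 * p + 2)) / 2 = j from by omega]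
  have hQ : ∀ (c : ZMod n),
      Aent n p γ α fI fJ (c + ((2 * p + α : ℕ) : ZMod n)) c
        = (4 * (p : ℤ) + (γ : ℤ) - 2) * (n : ℤ) + 1
            + 2 * ((((α : ZMod n))⁻¹ * c).val : ℤ) := by
    intro c
    have hd : (c + ((2 * p + α : ℕ) : ZMod n) - c).val = 2 * p + α := by
      rw [add_sub_cancel_left, ZMod.val_natCast_of_lt (by omega)]
    simp only [Aent]
    rw [hd, if_neg (by omega), if_neg (by omega), if_neg (by omega), if_neg (by omega),
      if_neg (by omega), if_pos rfl]
  refine ⟨?_, ?_, ?_, ?_, ?_⟩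
  · -- rows
    intro a
    refine ⟨?_, ?_, ?_⟩
    · intro i hi
      have e1 := hE (a - ((2 * i : ℕ) : ZMod n)) i hi
      rw [sub_add_cancel] at e1
      have e2 := hO (a - ((2 * i + 1 : ℕ) : ZMod n)) i hi
      rw [sub_add_cancel] at e2
      simp only [diagRow]
      rw [e1, e2]
      have hc : -(a - ((2 * i : ℕ) : ZMod n))
          = -(a - ((2 * i + 1 : ℕ) : ZMod n)) - 1 := by
        push_cast; ring
      rw [hc]
      linarith [myval_sub_one (a - ((2 * i + 1 : ℕ) : ZMod n))]
    · intro j hj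
      have e1 := hJ1 (a - ((2 * p + 2 * j + 1 : ℕ) : ZMod n)) j hj
      rw [sub_add_cancel] at e1
      have e2 := hJ2 (a - ((2 * p + 2 * j + 2 : ℕ) : ZMod n)) j hj
      rw [sub_add_cancel] at e2
      simp only [diagRow]
      rw [e1, e2]
      have hc : -(a - ((2 * p + 2 * j + 1 : ℕ) : ZMod n))
          = -(a - ((2 * p + 2 * j + 2 : ℕ) : ZMod n)) - 1 := by
        push_cast; ring
      rw [hc]
      linarith [myval_sub_one (a - ((2 * p + 2 * j + 2 : ℕ) : ZMod n))]
    · have e1 := hP (a - ((2 * p : ℕ) : ZMod n))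
      rw [sub_add_cancel] at e1
      have e2 := hQ (a - ((2 * p + α : ℕ) : ZMod n))
      rw [sub_add_cancel] at e2
      simp only [diagRow]
      rw [e1, e2]
      have hc : ((α : ZMod n))⁻¹ * (-(a - ((2 * p : ℕ) : ZMod n)))
          = -(((α : ZMod n))⁻¹ * (a - ((2 * p + α : ℕ) : ZMod n))) - 1 := by
        push_cast
        linear_combination -hinv
      rw [hc]
      linarith [myval_sub_one (((α : ZMod n))⁻¹ * (a - ((2 * p + α : ℕ) : ZMod n)))]
  · -- columns, a ≠ 0
    intro a ha
    have hval := myval_neg_add a ha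
    refine ⟨?_, ?_, ?_⟩
    · intro i hi
      simp only [diagCol]
      rw [hE a i hi, hO a i hi]
      linarith
    · intro j hj
      simp only [diagCol]
      rw [hJ1 a j hj, hJ2 a j hj]
      linarith
    · simp only [diagCol]
      rw [hP a, hQ a]
      have hne : ((α : ZMod n))⁻¹ * a ≠ 0 := by
        intro h
        have h2 : (α : ZMod n) * (((α : ZMod n))⁻¹ * a) = a := by
          rw [← mul_assoc, hinv, one_mul]
        rw [h, mul_zero] at h2
        exact ha h2.symm
      rw [mul_neg]
      linarith [myval_neg_add (((α : ZMod n))⁻¹ * a) hne]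
  · -- column 0, even/odd pairs
    intro i hi
    simp only [diagCol]
    rw [hE 0 i hi, hO 0 i hi]
    simp
    ring
  · intro j hj
    simp only [diagCol]
    rw [hJ1 0 j hj, hJ2 0 j hj]
    simp
    ring
  · simp only [diagCol]
    rw [hP 0, hQ 0]
    simp
    ring
end

section
/- Let p > 0, n ≥ 4p, γ > 0, α an integer with 2p−1 ≤ α ≤ n−2p−1 and gcd(α, n) = 1, and let f_I : {0,…,p−1} → {0,…,p−1} and f_J : {0,…,p−2} → {0,…,p−2} be bijections, and let A′ = A′(n,p,γ,α,f_I,f_J). Then for every row a ∈ ℤ_n: −(4p+γ)n < Σ(2p) = d_{2p}(r_a) + p < −(4p+γ−2)n + p − 1, and Σ(4p−2) = d_{2p}(r_a) + 1; and for every column a ≠ 0: −(4p+γ)n − p ≤ Σ̄(2p) = d_{2p}(c_a) − p ≤ −(4p+γ−2)n − p − 2. -/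
lemma st10_val_neg_one_sub {n : ℕ} (hn : 2 ≤ n) (c : ZMod n) :
    ((-1 - c).val : ℤ) = (n : ℤ) - 1 - (c.val : ℤ) := by
  haveI : NeZero n := ⟨by omega⟩
  have hc : c.val < n := ZMod.val_lt c
  have h : (-1 - c : ZMod n) = ((n - (1 + c.val) : ℕ) : ZMod n) := by
    rw [Nat.cast_sub (by omega)]
    push_cast
    rw [ZMod.natCast_self, ZMod.natCast_zmod_val]
    ring
  rw [h, ZMod.val_cast_of_lt (by omega)]
  omega

lemma st10_Aent_eval {n : ℕ} (p γ α : ℕ) (fI fJ : ℕ → ℕ) (r c : ZMod n) (d : ℕ)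
    (hrc : r - c = (d : ZMod n)) (hdn : d < n) :
    Aent n p γ α fI fJ r c =
      if d < 2 * p ∧ d % 2 = 0 then
        ((γ : ℤ) + 2) * (n : ℤ) + 4 * (fI (d / 2) : ℤ) * (n : ℤ) - 2 * (((-c).val : ℕ) : ℤ)
      else if d < 2 * p ∧ d % 2 = 1 then
        -(γ : ℤ) * (n : ℤ) - 4 * (fI ((d - 1) / 2) : ℤ) * (n : ℤ) - 1 - 2 * ((c.val : ℕ) : ℤ)
      else if d = 2 * p then
        -(4 * (p : ℤ) + (γ : ℤ)) * (n : ℤ) + 2 * (((((α : ZMod n))⁻¹ * (-c)).val : ℕ) : ℤ)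
      else if 2 * p < d ∧ d ≤ 4 * p - 2 ∧ d % 2 = 1 then
        (4 * (p : ℤ) + (γ : ℤ) - 6) * (n : ℤ) - 4 * (fJ ((d - (2 * p + 1)) / 2) : ℤ) * (n : ℤ)
          + 1 + 2 * (((-c).val : ℕ) : ℤ)
      else if 2 * p < d ∧ d ≤ 4 * p - 2 ∧ d % 2 = 0 then
        -(4 * (p : ℤ) + (γ : ℤ) - 4) * (n : ℤ) + 4 * (fJ ((d - (2 * p + 2)) / 2) : ℤ) * (n : ℤ)
          + 2 * ((c.val : ℕ) : ℤ)
      else if d = 2 * p + α then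
        (4 * (p : ℤ) + (γ : ℤ) - 2) * (n : ℤ) + 1 + 2 * (((((α : ZMod n))⁻¹ * c).val : ℕ) : ℤ)
      else 0 := by
  have h : (r - c).val = d := by rw [hrc, ZMod.val_cast_of_lt hdn]
  simp only [Aent, h]

lemma st10_sum_pairs (f : ℕ → ℤ) (m : ℕ) :
    ∑ d ∈ Finset.range (2*m), f d = ∑ i ∈ Finset.range m, (f (2*i) + f (2*i+1)) := by
  induction m with
  | zero => simp
  | succ k ih =>
    rw [show 2*(k+1) = (2*k+1)+1 by ring, Finset.sum_range_succ, Finset.sum_range_succ, ih,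
      Finset.sum_range_succ]
    ring

theorem statement10 (n p γ α : ℕ) (hp : 0 < p) (hn : 4 * p ≤ n) (hγ : 0 < γ)
    (hα1 : 2 * p - 1 ≤ α) (hα2 : α ≤ n - 2 * p - 1) (hgcd : Nat.gcd α n = 1)
    (fI fJ : ℕ → ℕ)
    (hfI : Set.BijOn fI (Set.Iio p) (Set.Iio p))
    (hfJ : Set.BijOn fJ (Set.Iio (p - 1)) (Set.Iio (p - 1)))
    (A' : ZMod n → ZMod n → ℤ) (hA' : A' = Aent n p γ α fI fJ) :
    (∀ a : ZMod n,
      (-(4 * (p : ℤ) + (γ : ℤ)) * (n : ℤ) < sigmaRow A' a (2 * p)) ∧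
      sigmaRow A' a (2 * p) = diagRow A' a (2 * p) + (p : ℤ) ∧
      (sigmaRow A' a (2 * p) < -(4 * (p : ℤ) + (γ : ℤ) - 2) * (n : ℤ) + (p : ℤ) - 1) ∧
      sigmaRow A' a (4 * p - 2) = diagRow A' a (2 * p) + 1) ∧
    (∀ a : ZMod n, a ≠ 0 →
      (-(4 * (p : ℤ) + (γ : ℤ)) * (n : ℤ) - (p : ℤ) ≤ sigmaCol A' a (2 * p)) ∧
      sigmaCol A' a (2 * p) = diagCol A' a (2 * p) - (p : ℤ) ∧
      (sigmaCol A' a (2 * p) ≤ -(4 * (p : ℤ) + (γ : ℤ) - 2) * (n : ℤ) - (p : ℤ) - 2)) := by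
  subst hA'
  haveI : NeZero n := ⟨by omega⟩
  have hn2 : 2 ≤ n := by omega
  constructor
  · -- rows
    intro a
    -- pair sums for D_{2i}, D_{2i+1}
    have hpairR : ∀ i, i < p → diagRow (Aent n p γ α fI fJ) a (2*i) + diagRow (Aent n p γ α fI fJ) a (2*i+1) = 1 := by
      intro i hi
      rw [diagRow, diagRow,
        st10_Aent_eval p γ α fI fJ _ _ (2*i) (by ring) (by omega),
        st10_Aent_eval p γ α fI fJ _ _ (2*i+1) (by ring) (by omega),
        if_pos ⟨by omega, by omega⟩, if_neg (by omega), if_pos ⟨by omega, by omega⟩,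
        show (2*i)/2 = i from by omega, show (2*i+1-1)/2 = i from by omega]
      have hc : a - ((2*i+1 : ℕ) : ZMod n) = -1 - (-(a - ((2*i : ℕ) : ZMod n))) := by
        push_cast; ring
      rw [hc, st10_val_neg_one_sub hn2]
      ring
    -- pair sums for D_{2p+1+2j}, D_{2p+2+2j}
    have hpairJ : ∀ j, j < p - 1 →
        diagRow (Aent n p γ α fI fJ) a (2*p+1+(2*j)) + diagRow (Aent n p γ α fI fJ) a (2*p+1+(2*j+1)) = -1 := by
      intro j hj
      rw [diagRow, diagRow,
        st10_Aent_eval p γ α fI fJ _ _ (2*p+1+(2*j)) (by ring) (by omega),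
        st10_Aent_eval p γ α fI fJ _ _ (2*p+1+(2*j+1)) (by ring) (by omega),
        if_neg (by omega), if_neg (by omega), if_neg (by omega),
        if_pos ⟨by omega, by omega, by omega⟩,
        if_neg (by omega), if_neg (by omega), if_neg (by omega), if_neg (by omega),
        if_pos ⟨by omega, by omega, by omega⟩,
        show (2*p+1+(2*j) - (2*p+1))/2 = j from by omega,
        show (2*p+1+(2*j+1) - (2*p+2))/2 = j from by omega]
      have hc : a - ((2*p+1+(2*j+1) : ℕ) : ZMod n)
          = -1 - (-(a - ((2*p+1+(2*j) : ℕ) : ZMod n))) := by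
        push_cast; ring
      rw [hc, st10_val_neg_one_sub hn2]
      ring
    -- the D_{2p} entry
    obtain ⟨x, hx, hDx⟩ : ∃ x : ℕ, x < n ∧
        diagRow (Aent n p γ α fI fJ) a (2*p) = -(4*(p:ℤ)+(γ:ℤ))*(n:ℤ) + 2*(x:ℤ) := by
      rw [diagRow, st10_Aent_eval p γ α fI fJ _ _ (2*p) (by ring) (by omega),
        if_neg (by omega), if_neg (by omega), if_pos rfl]
      exact ⟨_, ZMod.val_lt _, rfl⟩
    have hs1 : sigmaRow (Aent n p γ α fI fJ) a (2*p) = diagRow (Aent n p γ α fI fJ) a (2*p) + (p:ℤ) := by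
      rw [sigmaRow, Finset.sum_range_succ, st10_sum_pairs (fun d => diagRow (Aent n p γ α fI fJ) a d) p,
        Finset.sum_congr rfl (fun i hi => hpairR i (Finset.mem_range.mp hi))]
      simp [add_comm]
    have hs2 : sigmaRow (Aent n p γ α fI fJ) a (4*p-2) = diagRow (Aent n p γ α fI fJ) a (2*p) + 1 := by
      rw [sigmaRow, show 4*p-2+1 = 2*p+1+2*(p-1) from by omega,
        ← Finset.sum_range_add_sum_Ico _ (by omega : 2*p+1 ≤ 2*p+1+2*(p-1)),
        Finset.sum_Ico_eq_sum_range,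
        show 2*p+1+2*(p-1) - (2*p+1) = 2*(p-1) from by omega,
        st10_sum_pairs (fun k => diagRow (Aent n p γ α fI fJ) a (2*p+1+k)) (p-1),
        Finset.sum_congr rfl (fun j hj => hpairJ j (Finset.mem_range.mp hj))]
      have h1 : ∑ d ∈ Finset.range (2*p+1), diagRow (Aent n p γ α fI fJ) a d = diagRow (Aent n p γ α fI fJ) a (2*p) + (p:ℤ) := hs1
      rw [h1]
      simp only [Finset.sum_const, Finset.card_range, nsmul_eq_mul]
      have : ((p-1 : ℕ) : ℤ) = (p:ℤ) - 1 := by omega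
      rw [this]; ring
    have hx' : (x:ℤ) < (n:ℤ) := by exact_mod_cast hx
    have hx0 : (0:ℤ) ≤ (x:ℤ) := Int.ofNat_nonneg x
    have hp' : (1:ℤ) ≤ (p:ℤ) := by exact_mod_cast hp
    refine ⟨?_, hs1, ?_, hs2⟩
    · rw [hs1, hDx]; nlinarith [hx0, hp']
    · rw [hs1, hDx]; nlinarith [hx', hp']
  · -- columns
    intro a ha
    have hnegval : ((-a).val : ℤ) = (n:ℤ) - (a.val : ℤ) := by
      rw [ZMod.neg_val, if_neg ha]
      have : a.val < n := ZMod.val_lt a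
      omega
    have hpairC : ∀ i, i < p → diagCol (Aent n p γ α fI fJ) a (2*i) + diagCol (Aent n p γ α fI fJ) a (2*i+1) = -1 := by
      intro i hi
      rw [diagCol, diagCol,
        st10_Aent_eval p γ α fI fJ _ _ (2*i) (by ring) (by omega),
        st10_Aent_eval p γ α fI fJ _ _ (2*i+1) (by ring) (by omega),
        if_pos ⟨by omega, by omega⟩, if_neg (by omega), if_pos ⟨by omega, by omega⟩,
        show (2*i)/2 = i from by omega, show (2*i+1-1)/2 = i from by omega,
        hnegval]
      ring
    obtain ⟨x, hx, hDx⟩ : ∃ x : ℕ, x < n ∧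
        diagCol (Aent n p γ α fI fJ) a (2*p) = -(4*(p:ℤ)+(γ:ℤ))*(n:ℤ) + 2*(x:ℤ) := by
      rw [diagCol, st10_Aent_eval p γ α fI fJ _ _ (2*p) (by ring) (by omega),
        if_neg (by omega), if_neg (by omega), if_pos rfl]
      exact ⟨_, ZMod.val_lt _, rfl⟩
    have hs1 : sigmaCol (Aent n p γ α fI fJ) a (2*p) = diagCol (Aent n p γ α fI fJ) a (2*p) - (p:ℤ) := by
      rw [sigmaCol, Finset.sum_range_succ, st10_sum_pairs (fun d => diagCol (Aent n p γ α fI fJ) a d) p,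
        Finset.sum_congr rfl (fun i hi => hpairC i (Finset.mem_range.mp hi))]
      simp only [Finset.sum_const, Finset.card_range, nsmul_eq_mul]
      ring
    have hx' : (x:ℤ) < (n:ℤ) := by exact_mod_cast hx
    have hx0 : (0:ℤ) ≤ (x:ℤ) := Int.ofNat_nonneg x
    refine ⟨?_, hs1, ?_⟩
    · rw [hs1, hDx]; nlinarith [hx0]
    · rw [hs1, hDx]; nlinarith [hx']
end

section
/- Let A′ and A″ be the arrays A′(n,p,γ,α,f_I,f_J) and A′(n,p,γ,α,f_I′,f_J′) built from the same parameters n, p, γ, α (with p > 0, n ≥ 4p, γ > 0, 2p−1 ≤ α ≤ n−2p−1, gcd(α,n)=1) but possibly different bijections (f_I, f_J) and (f_I′, f_J′). Then for every row a and every column a, and all i ∈ {0,…,p−1} and j ∈ {0,…,p−2}: Σ_{A′}(2i+1) = Σ_{A″}(2i+1), Σ_{A′}(2p+2j+2) = Σ_{A″}(2p+2j+2), Σ_{A′}(2p) = Σ_{A″}(2p) and Σ_{A′}(2p+α) = Σ_{A″}(2p+α); and likewise Σ̄_{A′}(2i+1) = Σ̄_{A″}(2i+1), Σ̄_{A′}(2p+2j+2)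 = Σ̄_{A″}(2p+2j+2), Σ̄_{A′}(2p) = Σ̄_{A″}(2p) and Σ̄_{A′}(2p+α) = Σ̄_{A″}(2p+α). -/
def Ddiff (n p : ℕ) (fI fJ fI' fJ' : ℕ → ℕ) (d : ℕ) : ℤ :=
  if d < 2 * p ∧ d % 2 = 0 then
    4 * ((fI (d / 2) : ℤ) - (fI' (d / 2) : ℤ)) * (n : ℤ)
  else if d < 2 * p ∧ d % 2 = 1 then
    -4 * ((fI ((d - 1) / 2) : ℤ) - (fI' ((d - 1) / 2) : ℤ)) * (n : ℤ)
  else if d = 2 * p then 0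
  else if 2 * p < d ∧ d ≤ 4 * p - 2 ∧ d % 2 = 1 then
    -4 * ((fJ ((d - (2 * p + 1)) / 2) : ℤ) - (fJ' ((d - (2 * p + 1)) / 2) : ℤ)) * (n : ℤ)
  else if 2 * p < d ∧ d ≤ 4 * p - 2 ∧ d % 2 = 0 then
    4 * ((fJ ((d - (2 * p + 2)) / 2) : ℤ) - (fJ' ((d - (2 * p + 2)) / 2) : ℤ)) * (n : ℤ)
  else 0

lemma Aent_sub (n p γ α : ℕ) (fI fJ fI' fJ' : ℕ → ℕ) (a b : ZMod n) (d : ℕ)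
    (hd : d < n) (hab : (a - b).val = d) :
    Aent n p γ α fI fJ a b - Aent n p γ α fI' fJ' a b = Ddiff n p fI fJ fI' fJ' d := by
  simp only [Aent, Ddiff, hab]
  split_ifs <;> ring

lemma Ddiff_pair1 (n p : ℕ) (fI fJ fI' fJ' : ℕ → ℕ) (k : ℕ) (hk : k < p) :
    Ddiff n p fI fJ fI' fJ' (2 * k) + Ddiff n p fI fJ fI' fJ' (2 * k + 1) = 0 := by
  have c1 : 2 * k < 2 * p ∧ 2 * k % 2 = 0 := by omega
  have c2 : ¬(2 * k + 1 < 2 * p ∧ (2 * k + 1) % 2 = 0) := by omega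
  have c3 : 2 * k + 1 < 2 * p ∧ (2 * k + 1) % 2 = 1 := by omega
  have h1 : 2 * k / 2 = k := by omega
  have h2 : (2 * k + 1 - 1) / 2 = k := by omega
  simp only [Ddiff, if_pos c1, if_neg c2, if_pos c3, h1, h2]
  ring

lemma Ddiff_pair2 (n p : ℕ) (fI fJ fI' fJ' : ℕ → ℕ) (m : ℕ) (hm : m + 2 ≤ p) :
    Ddiff n p fI fJ fI' fJ' (2 * p + 2 * m + 1) + Ddiff n p fI fJ fI' fJ' (2 * p + 2 * m + 2)
      = 0 := by
  have c1 : ¬(2 * p + 2 * m + 1 < 2 * p ∧ (2 * p + 2 * m + 1) % 2 = 0) := by omega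
  have c2 : ¬(2 * p + 2 * m + 1 < 2 * p ∧ (2 * p + 2 * m + 1) % 2 = 1) := by omega
  have c3 : ¬(2 * p + 2 * m + 1 = 2 * p) := by omega
  have c4 : 2 * p < 2 * p + 2 * m + 1 ∧ 2 * p + 2 * m + 1 ≤ 4 * p - 2 ∧
      (2 * p + 2 * m + 1) % 2 = 1 := by omega
  have d1 : ¬(2 * p + 2 * m + 2 < 2 * p ∧ (2 * p + 2 * m + 2) % 2 = 0) := by omega
  have d2 : ¬(2 * p + 2 * m + 2 < 2 * p ∧ (2 * p + 2 * m + 2) % 2 = 1) := by omega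
  have d3 : ¬(2 * p + 2 * m + 2 = 2 * p) := by omega
  have d4 : ¬(2 * p < 2 * p + 2 * m + 2 ∧ 2 * p + 2 * m + 2 ≤ 4 * p - 2 ∧
      (2 * p + 2 * m + 2) % 2 = 1) := by omega
  have d5 : 2 * p < 2 * p + 2 * m + 2 ∧ 2 * p + 2 * m + 2 ≤ 4 * p - 2 ∧
      (2 * p + 2 * m + 2) % 2 = 0 := by omega
  have h1 : (2 * p + 2 * m + 1 - (2 * p + 1)) / 2 = m := by omega
  have h2 : (2 * p + 2 * m + 2 - (2 * p + 2)) / 2 = m := by omega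
  simp only [Ddiff, if_neg c1, if_neg c2, if_neg c3, if_pos c4, if_neg d1, if_neg d2,
    if_neg d3, if_neg d4, if_pos d5, h1, h2]
  ring

lemma Ddiff_2p (n p : ℕ) (fI fJ fI' fJ' : ℕ → ℕ) :
    Ddiff n p fI fJ fI' fJ' (2 * p) = 0 := by
  have c1 : ¬(2 * p < 2 * p ∧ 2 * p % 2 = 0) := by omega
  have c2 : ¬(2 * p < 2 * p ∧ 2 * p % 2 = 1) := by omega
  simp only [Ddiff, if_neg c1, if_neg c2]
  simp

lemma Ddiff_big (n p : ℕ) (fI fJ fI' fJ' : ℕ → ℕ) (d : ℕ) (h1 : 2 * p < d)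
    (h2 : 4 * p - 2 < d) : Ddiff n p fI fJ fI' fJ' d = 0 := by
  have c1 : ¬(d < 2 * p ∧ d % 2 = 0) := by omega
  have c2 : ¬(d < 2 * p ∧ d % 2 = 1) := by omega
  have c3 : ¬(d = 2 * p) := by omega
  have c4 : ¬(2 * p < d ∧ d ≤ 4 * p - 2 ∧ d % 2 = 1) := by omega
  have c5 : ¬(2 * p < d ∧ d ≤ 4 * p - 2 ∧ d % 2 = 0) := by omega
  simp only [Ddiff, if_neg c1, if_neg c2, if_neg c3, if_neg c4, if_neg c5]

lemma Dsum1 (n p : ℕ) (fI fJ fI' fJ' : ℕ → ℕ) :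
    ∀ t, t ≤ p → ∑ d ∈ Finset.range (2 * t), Ddiff n p fI fJ fI' fJ' d = 0 := by
  intro t
  induction t with
  | zero => simp
  | succ t ih =>
    intro ht
    have h2 : 2 * (t + 1) = 2 * t + 1 + 1 := by ring
    rw [h2, Finset.sum_range_succ, Finset.sum_range_succ, ih (by omega), zero_add,
      Ddiff_pair1 n p fI fJ fI' fJ' t (by omega)]

lemma Dsum2 (n p : ℕ) (fI fJ fI' fJ' : ℕ → ℕ) :
    ∑ d ∈ Finset.range (2 * p + 1), Ddiff n p fI fJ fI' fJ' d = 0 := by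
  rw [Finset.sum_range_succ, Dsum1 n p fI fJ fI' fJ' p le_rfl, Ddiff_2p, zero_add]

lemma Dsum3 (n p : ℕ) (fI fJ fI' fJ' : ℕ → ℕ) :
    ∀ m, m + 1 ≤ p → ∑ d ∈ Finset.range (2 * p + 1 + 2 * m), Ddiff n p fI fJ fI' fJ' d = 0 := by
  intro m
  induction m with
  | zero => intro _; simpa using Dsum2 n p fI fJ fI' fJ'
  | succ m ih =>
    intro hm
    have h2 : 2 * p + 1 + 2 * (m + 1) = (2 * p + 2 * m + 1) + 1 + 1 := by ring
    have h3 : 2 * p + 1 + 2 * m = 2 * p + 2 * m + 1 := by ring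
    rw [h2, Finset.sum_range_succ, Finset.sum_range_succ, ← h3, ih (by omega), zero_add, h3,
      add_assoc]
    exact Ddiff_pair2 n p fI fJ fI' fJ' m (by omega)

theorem statement11 (n p γ α : ℕ) (hp : 0 < p) (hn : 4 * p ≤ n) (hγ : 0 < γ)
    (hα1 : 2 * p - 1 ≤ α) (hα2 : α ≤ n - 2 * p - 1) (hgcd : Nat.gcd α n = 1)
    (fI fJ fI' fJ' : ℕ → ℕ)
    (hfI : Set.BijOn fI (Set.Iio p) (Set.Iio p))
    (hfJ : Set.BijOn fJ (Set.Iio (p - 1)) (Set.Iio (p - 1)))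
    (hfI' : Set.BijOn fI' (Set.Iio p) (Set.Iio p))
    (hfJ' : Set.BijOn fJ' (Set.Iio (p - 1)) (Set.Iio (p - 1)))
    (A' A'' : ZMod n → ZMod n → ℤ)
    (hA' : A' = Aent n p γ α fI fJ) (hA'' : A'' = Aent n p γ α fI' fJ') :
    (∀ a : ZMod n,
      (∀ i < p, sigmaRow A' a (2 * i + 1) = sigmaRow A'' a (2 * i + 1)) ∧
      (∀ j < p - 1,
        sigmaRow A' a (2 * p + 2 * j + 2) = sigmaRow A'' a (2 * p + 2 * j + 2)) ∧
      sigmaRow A' a (2 * p) = sigmaRow A'' a (2 * p) ∧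
      sigmaRow A' a (2 * p + α) = sigmaRow A'' a (2 * p + α)) ∧
    (∀ a : ZMod n,
      (∀ i < p, sigmaCol A' a (2 * i + 1) = sigmaCol A'' a (2 * i + 1)) ∧
      (∀ j < p - 1,
        sigmaCol A' a (2 * p + 2 * j + 2) = sigmaCol A'' a (2 * p + 2 * j + 2)) ∧
      sigmaCol A' a (2 * p) = sigmaCol A'' a (2 * p) ∧
      sigmaCol A' a (2 * p + α) = sigmaCol A'' a (2 * p + α)) := by
  have hn0 : 0 < n := by omega
  have hsumI : ∀ i < p, ∑ d ∈ Finset.range (2 * i + 1 + 1), Ddiff n p fI fJ fI' fJ' d = 0 := by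
    intro i hi
    have : 2 * i + 1 + 1 = 2 * (i + 1) := by ring
    rw [this]; exact Dsum1 n p fI fJ fI' fJ' (i + 1) (by omega)
  have hsumJ : ∀ j < p - 1,
      ∑ d ∈ Finset.range (2 * p + 2 * j + 2 + 1), Ddiff n p fI fJ fI' fJ' d = 0 := by
    intro j hj
    have : 2 * p + 2 * j + 2 + 1 = 2 * p + 1 + 2 * (j + 1) := by ring
    rw [this]; exact Dsum3 n p fI fJ fI' fJ' (j + 1) (by omega)
  have hsumα : ∑ d ∈ Finset.range (2 * p + α + 1), Ddiff n p fI fJ fI' fJ' d = 0 := by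
    have h1 : 4 * p - 1 ≤ 2 * p + α + 1 := by omega
    rw [Finset.range_eq_Ico, ← Finset.sum_Ico_consecutive _ (Nat.zero_le (4 * p - 1)) h1]
    have e1 : ∑ d ∈ Finset.Ico 0 (4 * p - 1), Ddiff n p fI fJ fI' fJ' d = 0 := by
      have : 4 * p - 1 = 2 * p + 1 + 2 * (p - 1) := by omega
      rw [← Finset.range_eq_Ico, this]
      exact Dsum3 n p fI fJ fI' fJ' (p - 1) (by omega)
    have e2 : ∑ d ∈ Finset.Ico (4 * p - 1) (2 * p + α + 1), Ddiff n p fI fJ fI' fJ' d = 0 := by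
      refine Finset.sum_eq_zero fun d hd => ?_
      have hd' := Finset.mem_Ico.mp hd
      exact Ddiff_big n p fI fJ fI' fJ' d (by omega) (by omega)
    rw [e1, e2, add_zero]
  have hrow : ∀ (a : ZMod n) (x : ℕ), x < n →
      sigmaRow A' a x - sigmaRow A'' a x = ∑ d ∈ Finset.range (x + 1), Ddiff n p fI fJ fI' fJ' d := by
    intro a x hx
    rw [hA', hA'']
    unfold sigmaRow diagRow
    rw [← Finset.sum_sub_distrib]
    refine Finset.sum_congr rfl fun d hd => ?_
    have hdn : d < n := by have := Finset.mem_range.mp hd; omega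
    refine Aent_sub n p γ α fI fJ fI' fJ' a _ d hdn ?_
    rw [sub_sub_cancel, ZMod.val_natCast_of_lt hdn]
  have hcol : ∀ (a : ZMod n) (x : ℕ), x < n →
      sigmaCol A' a x - sigmaCol A'' a x = ∑ d ∈ Finset.range (x + 1), Ddiff n p fI fJ fI' fJ' d := by
    intro a x hx
    rw [hA', hA'']
    unfold sigmaCol diagCol
    rw [← Finset.sum_sub_distrib]
    refine Finset.sum_congr rfl fun d hd => ?_
    have hdn : d < n := by have := Finset.mem_range.mp hd; omega
    refine Aent_sub n p γ α fI fJ fI' fJ' _ _ d hdn ?_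
    rw [add_sub_cancel_left, ZMod.val_natCast_of_lt hdn]
  have hαn : 2 * p + α < n := by omega
  constructor
  · intro a
    refine ⟨fun i hi => ?_, fun j hj => ?_, ?_, ?_⟩
    · have := hrow a (2 * i + 1) (by omega)
      rw [hsumI i hi] at this; linarith
    · have := hrow a (2 * p + 2 * j + 2) (by omega)
      rw [hsumJ j hj] at this; linarith
    · have := hrow a (2 * p) (by omega)
      rw [Dsum2 n p fI fJ fI' fJ'] at this; linarith
    · have := hrow a (2 * p + α) hαn
      rw [hsumα] at this; linarith
  · intro a
    refine ⟨fun i hi => ?_, fun j hj => ?_, ?_, ?_⟩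
    · have := hcol a (2 * i + 1) (by omega)
      rw [hsumI i hi] at this; linarith
    · have := hcol a (2 * p + 2 * j + 2) (by omega)
      rw [hsumJ j hj] at this; linarith
    · have := hcol a (2 * p) (by omega)
      rw [Dsum2 n p fI fJ fI' fJ'] at this; linarith
    · have := hcol a (2 * p + α) hαn
      rw [hsumα] at this; linarith
end

section
/- Let n ≡ 1 (mod 4), p > 0, n > 4p+3, let α be an integer with 2p+2 ≤ α ≤ n−2−2p and gcd(n, α) = 1, set β = 2p+α−3, and let L be a fixed integer Heffter array H(n;3) satisfying the hypotheses of the merging construction (non-empty cells exactly the diagonals D_β, D_{β+2}, D_{β+4}; absolute values of entries on D_{β+2} exactly {1,…,n}; absolute values of entries on D_β ∪ D_{β+4} exactly {n+1,…,3n}; entries on D_β positive; entries on D_{β+4} negative; L(β,0) ≠ 2n−1 and −L(β+4,0) ≠ 2n−1). Let (f_I, f_J) and (f_I′, f_J′) be two distinct pairs of bijections of {0,…,p−1} and {0,…,p−2} respectively, each pair satisfying f_I(0) = 0, 2·f_I(i) ≠ 2p−i+1 for all i and 4·f_J(j) ≠ p−j−4 for all j. Let B′ and B″ be the merged arrays obtained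 from A′(n,p,3,α,f_I,f_J) and A′(n,p,3,α,f_I′,f_J′), respectively, by replacing the cells on diagonals D_β, D_{β+2}, D_{β+4} with the entries of L. Then B′ and B″ are non-equivalent Heffter arrays. -/
/-- A square *integer* Heffter array `H(n;k)`: an `n × n` partially filled array of
integers (empty cells represented by `0`), rows and columns indexed by `ZMod n`, such
that each row and each column has exactly `k` filled cells, every row and column sums
to `0` in the integers, and for each `1 ≤ x ≤ nk` exactly one of `x, -x` appears, in
exactly one cell. -/
def IsIntHeffterSq (n k : ℕ) [NeZero n] (A : ZMod n → ZMod n → ℤ) : Prop :=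
  (∀ a : ZMod n, (Finset.univ.filter (fun b => A a b ≠ 0)).card = k) ∧
  (∀ b : ZMod n, (Finset.univ.filter (fun a => A a b ≠ 0)).card = k) ∧
  (∀ a : ZMod n, (∑ b : ZMod n, A a b) = 0) ∧
  (∀ b : ZMod n, (∑ a : ZMod n, A a b) = 0) ∧
  (∀ a b : ZMod n, A a b ≠ 0 → (A a b).natAbs ∈ Finset.Icc 1 (n * k)) ∧
  (∀ v ∈ Finset.Icc 1 (n * k), ∃! c : ZMod n × ZMod n, (A c.1 c.2).natAbs = v)

/-- The merged array `B′`: on the three diagonals `D_{2p+α-3}`, `D_{2p+α-1}`,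
`D_{2p+α+1}` it agrees with `L`, and elsewhere with `A′ = A′(n,p,3,α,f_I,f_J)`. -/
def Merged (n p α : ℕ) (fI fJ : ℕ → ℕ) (L : ZMod n → ZMod n → ℤ) :
    ZMod n → ZMod n → ℤ := fun a b =>
  if (a - b).val = 2 * p + α - 3 ∨ (a - b).val = 2 * p + α - 1 ∨
      (a - b).val = 2 * p + α + 1 then L a b
  else Aent n p 3 α fI fJ a b

/-- Two `n × n` partially filled integer arrays are equivalent if one is obtained from
the other by a sequence of row permutations, column permutations, negating every
entry, and/or transposing (any such sequence reduces to this normal form). -/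
def ArrEquiv (n : ℕ) (A B : ZMod n → ZMod n → ℤ) : Prop :=
  ∃ (ρ σ : Equiv.Perm (ZMod n)) (ε : ℤ), (ε = 1 ∨ ε = -1) ∧
    ((∀ i j, B i j = ε * A (ρ i) (σ j)) ∨ (∀ i j, B i j = ε * A (ρ j) (σ i)))

section AuxLemmas

variable {n p α : ℕ} [NeZero n]

private lemma inv_mul_alpha (hgcd : Nat.gcd n α = 1) :
    ((α : ZMod n))⁻¹ * (α : ZMod n) = 1 :=
  ZMod.inv_mul_of_unit _ (by
    rw [ZMod.isUnit_iff_coprime]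
    exact Nat.coprime_comm.mp hgcd)

private lemma cast_val_eq (z : ZMod n) : ((z.val : ℕ) : ZMod n) = z :=
  ZMod.natCast_rightInverse z

/-- Key uniqueness: any cell of the merged array whose entry has absolute value
`(4p+3)n - 2x` lies on the diagonal `D_{2p}` at the cell determined by `x`. -/
private lemma keyUnique (hp : 0 < p) (hn : 4 * p + 3 < n) (hgcd : Nat.gcd n α = 1)
    (L : ZMod n → ZMod n → ℤ) (hLbd : ∀ a b : ZMod n, (L a b).natAbs ≤ 3 * n)
    (fI fJ : ℕ → ℕ) (hfI : ∀ i < p, fI i < p) (hfJ : ∀ j < p - 1, fJ j < p - 1)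
    (x : ℕ) (hx : x < n) (a b : ZMod n)
    (h : (Merged n p α fI fJ L a b).natAbs = (4 * p + 3) * n - 2 * x) :
    (a - b).val = 2 * p ∧ b = -((α : ZMod n) * (x : ℕ)) ∧
      Merged n p α fI fJ L a b = -((4 * (p : ℤ) + 3) * (n : ℤ)) + 2 * (x : ℤ) := by
  have hn0 : 0 < n := Nat.pos_of_ne_zero (NeZero.ne n)
  have hn0' : (0 : ℤ) ≤ (n : ℤ) := Int.natCast_nonneg n
  have hpv : (1 : ℤ) ≤ (p : ℤ) := by exact_mod_cast hp
  have hpn : 1 * (n : ℤ) ≤ (p : ℤ) * n := mul_le_mul_of_nonneg_right hpv hn0'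
  have hnv : (4 * (p : ℤ) + 3 + 1) ≤ (n : ℤ) := by exact_mod_cast hn
  have hxv : (x : ℤ) ≤ (n : ℤ) - 1 := by omega
  have hle : 2 * x ≤ (4 * p + 3) * n := by nlinarith
  have hcast : (((4 * p + 3) * n - 2 * x : ℕ) : ℤ) = (4 * (p : ℤ) + 3) * n - 2 * x := by
    rw [Nat.cast_sub hle]; push_cast; ring
  have h' : Merged n p α fI fJ L a b = (4 * (p : ℤ) + 3) * n - 2 * x ∨
      Merged n p α fI fJ L a b = -((4 * (p : ℤ) + 3) * n - 2 * x) := by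
    rcases Int.natAbs_eq_iff.mp h with h | h
    · left; rw [h, hcast]
    · right; rw [h, hcast]
  clear h
  by_cases hdiag : (a - b).val = 2 * p + α - 3 ∨ (a - b).val = 2 * p + α - 1 ∨
      (a - b).val = 2 * p + α + 1
  · exfalso
    have hM : Merged n p α fI fJ L a b = L a b := by
      simp only [Merged, if_pos hdiag]
    rw [hM] at h'
    have habs : |L a b| ≤ (3 * (n : ℤ)) := by
      rw [Int.abs_eq_natAbs]
      exact_mod_cast hLbd a b
    rcases h' with h | h
    · have := le_abs_self (L a b); linarith
    · have := neg_abs_le (L a b); linarith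
  · have he : Merged n p α fI fJ L a b = Aent n p 3 α fI fJ a b := by
      simp only [Merged, if_neg hdiag]
    rw [he] at h' ⊢
    rw [Aent] at h' ⊢
    split_ifs at h' ⊢ with h1 h2 h3 h4 h5 h6
    · -- D_{2i}: positive entry ≤ (4p+1)n
      exfalso
      set k := fI ((a - b).val / 2) with hkdef
      have hk : k < p := hfI _ (by omega)
      have hkv : (k : ℤ) ≤ (p : ℤ) - 1 := by omega
      have hkn : (k : ℤ) * n ≤ ((p : ℤ) - 1) * n := mul_le_mul_of_nonneg_right hkv hn0'
      have hkn0 : (0 : ℤ) ≤ (k : ℤ) * n :=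
        mul_nonneg (Int.natCast_nonneg _) hn0'
      have hy : (((-b).val : ℕ) : ℤ) < (n : ℤ) := by exact_mod_cast ZMod.val_lt (-b)
      have hy0 : (0 : ℤ) ≤ (((-b).val : ℕ) : ℤ) := Int.natCast_nonneg _
      rcases h' with h | h <;> push_cast at h <;> linarith
    · -- D_{2i+1}: negative entry, abs ≤ (4p+1)n - 1
      exfalso
      set k := fI (((a - b).val - 1) / 2) with hkdef
      have hk : k < p := hfI _ (by omega)
      have hkv : (k : ℤ) ≤ (p : ℤ) - 1 := by omega
      have hkn : (k : ℤ) * n ≤ ((p : ℤ) - 1) * n := mul_le_mul_of_nonneg_right hkv hn0'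
      have hkn0 : (0 : ℤ) ≤ (k : ℤ) * n :=
        mul_nonneg (Int.natCast_nonneg _) hn0'
      have hy : ((b.val : ℕ) : ℤ) < (n : ℤ) := by exact_mod_cast ZMod.val_lt b
      have hy0 : (0 : ℤ) ≤ ((b.val : ℕ) : ℤ) := Int.natCast_nonneg _
      rcases h' with h | h <;> push_cast at h <;> linarith
    · -- D_{2p}: the good case
      have hy : ((((α : ZMod n))⁻¹ * (-b)).val : ℤ) < (n : ℤ) := by
        exact_mod_cast ZMod.val_lt (((α : ZMod n))⁻¹ * (-b))
      have hy0 : (0 : ℤ) ≤ (((((α : ZMod n))⁻¹ * (-b)).val : ℕ) : ℤ) := Int.natCast_nonneg _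
      have hyx : ((((α : ZMod n))⁻¹ * (-b)).val : ℕ) = x := by
        rcases h' with h | h <;> push_cast at h
        · exfalso; linarith
        · have : (((((α : ZMod n))⁻¹ * (-b)).val : ℕ) : ℤ) = (x : ℤ) := by linarith
          exact_mod_cast this
      refine ⟨h3, ?_, ?_⟩
      · have hb : ((α : ZMod n))⁻¹ * (-b) = ((x : ℕ) : ZMod n) := by
          rw [← hyx]; exact (cast_val_eq _).symm
        have h2 : (α : ZMod n) * (((α : ZMod n))⁻¹ * (-b))
            = (α : ZMod n) * ((x : ℕ) : ZMod n) := by rw [hb]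
        rw [← mul_assoc, mul_comm (α : ZMod n) ((α : ZMod n))⁻¹, inv_mul_alpha hgcd,
          one_mul] at h2
        have h3' := congrArg Neg.neg h2
        rw [neg_neg] at h3'
        rw [h3']
      · rw [hyx]; push_cast; ring
    · -- D_{2p+1+2j}: positive entry, abs ≤ (4p-1)n - 1
      exfalso
      obtain ⟨hd1, hd2, hd3⟩ := h4
      have hp2 : 2 ≤ p := by omega
      set k := fJ (((a - b).val - (2 * p + 1)) / 2) with hkdef
      have hk : k < p - 1 := hfJ _ (by omega)
      have hkv : (k : ℤ) ≤ (p : ℤ) - 2 := by omega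
      have hkn : (k : ℤ) * n ≤ ((p : ℤ) - 2) * n := mul_le_mul_of_nonneg_right hkv hn0'
      have hkn0 : (0 : ℤ) ≤ (k : ℤ) * n :=
        mul_nonneg (Int.natCast_nonneg _) hn0'
      have hy : (((-b).val : ℕ) : ℤ) < (n : ℤ) := by exact_mod_cast ZMod.val_lt (-b)
      have hy0 : (0 : ℤ) ≤ (((-b).val : ℕ) : ℤ) := Int.natCast_nonneg _
      rcases h' with h | h <;> push_cast at h <;> linarith
    · -- D_{2p+2+2j}: negative entry, abs ≤ (4p-1)n
      exfalso
      obtain ⟨hd1, hd2, hd3⟩ := h5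
      have hp2 : 2 ≤ p := by omega
      set k := fJ (((a - b).val - (2 * p + 2)) / 2) with hkdef
      have hk : k < p - 1 := hfJ _ (by omega)
      have hkv : (k : ℤ) ≤ (p : ℤ) - 2 := by omega
      have hkn : (k : ℤ) * n ≤ ((p : ℤ) - 2) * n := mul_le_mul_of_nonneg_right hkv hn0'
      have hkn0 : (0 : ℤ) ≤ (k : ℤ) * n :=
        mul_nonneg (Int.natCast_nonneg _) hn0'
      have hy : ((b.val : ℕ) : ℤ) < (n : ℤ) := by exact_mod_cast ZMod.val_lt b
      have hy0 : (0 : ℤ) ≤ ((b.val : ℕ) : ℤ) := Int.natCast_nonneg _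
      rcases h' with h | h <;> push_cast at h <;> linarith
    · -- D_{2p+α}: even entry, cannot equal the odd value
      exfalso
      have hy : ((((α : ZMod n))⁻¹ * b).val : ℤ) < (n : ℤ) := by
        exact_mod_cast ZMod.val_lt (((α : ZMod n))⁻¹ * b)
      have hy0 : (0 : ℤ) ≤ (((((α : ZMod n))⁻¹ * b).val : ℕ) : ℤ) := Int.natCast_nonneg _
      rcases h' with h | h <;> push_cast at h
      · have hpar : 2 * (((((α : ZMod n))⁻¹ * b).val : ℕ) : ℤ) + 2 * (x : ℤ) + 1
            = 2 * (n : ℤ) := by linarith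
        omega
      · linarith
    · -- empty cell
      exfalso
      rcases h' with h | h <;> linarith

/-- Value of the merged array on the diagonal `D_{2p}`. -/
private lemma merged_at_D2p (hp : 0 < p) (hn : 4 * p + 3 < n) (hα1 : 2 * p + 2 ≤ α)
    (hgcd : Nat.gcd n α = 1) (L : ZMod n → ZMod n → ℤ) (fI fJ : ℕ → ℕ)
    (x : ℕ) (hx : x < n) :
    Merged n p α fI fJ L (((2 * p : ℕ) : ZMod n) - (α : ZMod n) * (x : ℕ))
        (-((α : ZMod n) * (x : ℕ)))
      = -((4 * (p : ℤ) + 3) * (n : ℤ)) + 2 * (x : ℤ) := by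
  have hab : (((2 * p : ℕ) : ZMod n) - (α : ZMod n) * (x : ℕ)) - (-((α : ZMod n) * (x : ℕ)))
      = ((2 * p : ℕ) : ZMod n) := by ring
  have hdval : ((((2 * p : ℕ) : ZMod n) - (α : ZMod n) * (x : ℕ)) -
      (-((α : ZMod n) * (x : ℕ)))).val = 2 * p := by
    rw [hab]; exact ZMod.val_cast_of_lt (by omega)
  have hinv : ((α : ZMod n))⁻¹ * (-(-((α : ZMod n) * (x : ℕ)))) = ((x : ℕ) : ZMod n) := by
    rw [neg_neg, ← mul_assoc, inv_mul_alpha hgcd, one_mul]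
  simp only [Merged, Aent]
  rw [hdval, hinv]
  rw [if_neg (by omega), if_neg (by omega), if_neg (by omega), if_pos rfl]
  rw [ZMod.val_cast_of_lt hx]
  push_cast
  ring

/-- Value of the merged array at the cell `(2i, 0)` of the diagonal `D_{2i}`. -/
private lemma merged_at_row (hp : 0 < p) (hn : 4 * p + 3 < n) (hα1 : 2 * p + 2 ≤ α)
    (L : ZMod n → ZMod n → ℤ) (fI fJ : ℕ → ℕ) (i : ℕ) (hi : i < p) :
    Merged n p α fI fJ L ((2 * i : ℕ) : ZMod n) 0
      = 5 * (n : ℤ) + 4 * (fI i : ℤ) * (n : ℤ) := by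
  have hdval : (((2 * i : ℕ) : ZMod n) - 0).val = 2 * i := by
    rw [sub_zero]; exact ZMod.val_cast_of_lt (by omega)
  simp only [Merged, Aent]
  rw [hdval]
  rw [if_neg (by omega), if_pos (by omega)]
  rw [show 2 * i / 2 = i by omega, neg_zero, ZMod.val_zero]
  push_cast
  ring

/-- Value of the merged array at the cell `(2p+2+2j, 0)` of the diagonal `D_{2p+2+2j}`. -/
private lemma merged_at_col (hp : 0 < p) (hn : 4 * p + 3 < n) (hα1 : 2 * p + 2 ≤ α)
    (L : ZMod n → ZMod n → ℤ) (fI fJ : ℕ → ℕ) (j : ℕ) (hj : j < p - 1) :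
    Merged n p α fI fJ L ((2 * p + 2 + 2 * j : ℕ) : ZMod n) 0
      = -((4 * (p : ℤ) - 1) * (n : ℤ)) + 4 * (fJ j : ℤ) * (n : ℤ) := by
  have hp2 : 2 ≤ p := by omega
  have hdval : (((2 * p + 2 + 2 * j : ℕ) : ZMod n) - 0).val = 2 * p + 2 + 2 * j := by
    rw [sub_zero]; exact ZMod.val_cast_of_lt (by omega)
  simp only [Merged, Aent]
  rw [hdval]
  rw [if_neg (by omega), if_neg (by omega), if_neg (by omega), if_neg (by omega),
    if_neg (by omega), if_pos (by omega)]
  rw [show (2 * p + 2 + 2 * j - (2 * p + 2)) / 2 = j by omega, ZMod.val_zero]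
  push_cast
  ring

/-- Value of the merged array at the cell `(2p+α, 0)` of the diagonal `D_{2p+α}`. -/
private lemma merged_at_D2pa (hp : 0 < p) (hn : 4 * p + 3 < n) (hα1 : 2 * p + 2 ≤ α)
    (hα2 : α ≤ n - 2 - 2 * p) (L : ZMod n → ZMod n → ℤ) (fI fJ : ℕ → ℕ) :
    Merged n p α fI fJ L ((2 * p + α : ℕ) : ZMod n) 0
      = (4 * (p : ℤ) + 1) * (n : ℤ) + 1 := by
  have hdval : (((2 * p + α : ℕ) : ZMod n) - 0).val = 2 * p + α := by
    rw [sub_zero]; exact ZMod.val_cast_of_lt (by omega)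
  simp only [Merged, Aent]
  rw [hdval]
  rw [if_neg (by omega), if_neg (by omega), if_neg (by omega), if_neg (by omega),
    if_neg (by omega), if_neg (by omega), if_pos rfl]
  rw [mul_zero, ZMod.val_zero]
  push_cast
  ring

/-- The cell `(2p, α)` of the merged array is either empty or occupied by an entry
of `L` (and hence of absolute value at most `3n`). -/
private lemma merged_bad (hn1 : n % 4 = 1) (hp : 0 < p) (hn : 4 * p + 3 < n)
    (hα1 : 2 * p + 2 ≤ α) (hα2 : α ≤ n - 2 - 2 * p)
    (L : ZMod n → ZMod n → ℤ) (hLbd : ∀ a b : ZMod n, (L a b).natAbs ≤ 3 * n)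
    (fI fJ : ℕ → ℕ) :
    (Merged n p α fI fJ L ((2 * p : ℕ) : ZMod n) ((α : ℕ) : ZMod n)).natAbs ≤ 3 * n := by
  have hsub : (((2 * p : ℕ) : ZMod n) - ((α : ℕ) : ZMod n))
      = ((n + 2 * p - α : ℕ) : ZMod n) := by
    have h1 : ((n + 2 * p - α : ℕ) : ZMod n) = ((n + 2 * p : ℕ) : ZMod n) - ((α : ℕ) : ZMod n) := by
      rw [← Nat.cast_sub (by omega)]
    rw [h1]
    push_cast
    simp [ZMod.natCast_self]
  have hdval : ((((2 * p : ℕ) : ZMod n)) - ((α : ℕ) : ZMod n)).val = n + 2 * p - α := by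
    rw [hsub]; exact ZMod.val_cast_of_lt (by omega)
  by_cases hdiag : ((((2 * p : ℕ) : ZMod n)) - ((α : ℕ) : ZMod n)).val = 2 * p + α - 3 ∨
      ((((2 * p : ℕ) : ZMod n)) - ((α : ℕ) : ZMod n)).val = 2 * p + α - 1 ∨
      ((((2 * p : ℕ) : ZMod n)) - ((α : ℕ) : ZMod n)).val = 2 * p + α + 1
  · simp only [Merged, if_pos hdiag]
    exact hLbd _ _
  · simp only [Merged, if_neg hdiag, Aent]
    rw [hdval]
    rw [if_neg (by omega), if_neg (by omega), if_neg (by omega), if_neg (by omega),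
      if_neg (by omega), if_neg (by omega)]
    simp

/-- Multiplication by a unit `α` hits every element with a parameter `x < n`. -/
private lemma alpha_mul_surj (hgcd : Nat.gcd n α = 1) (w : ZMod n) :
    ∃ x : ℕ, x < n ∧ (α : ZMod n) * ((x : ℕ) : ZMod n) = w := by
  refine ⟨(((α : ZMod n))⁻¹ * w).val, ZMod.val_lt _, ?_⟩
  rw [cast_val_eq, ← mul_assoc, mul_comm (α : ZMod n) ((α : ZMod n))⁻¹,
    inv_mul_alpha hgcd, one_mul]

end AuxLemmas

theorem statement13 (n p α : ℕ) [NeZero n] (hn1 : n % 4 = 1) (hp : 0 < p)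
    (hn : 4 * p + 3 < n) (hα1 : 2 * p + 2 ≤ α) (hα2 : α ≤ n - 2 - 2 * p)
    (hgcd : Nat.gcd n α = 1)
    (L : ZMod n → ZMod n → ℤ)
    (hL : IsIntHeffterSq n 3 L)
    (hLdiag : ∀ a b : ZMod n, L a b ≠ 0 ↔
      ((a - b).val = 2 * p + α - 3 ∨ (a - b).val = 2 * p + α - 1 ∨
        (a - b).val = 2 * p + α + 1))
    (hLmid : ∀ v ∈ Finset.Icc 1 n,
      ∃! b : ZMod n, (L (b + ((2 * p + α - 1 : ℕ) : ZMod n)) b).natAbs = v)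
    (hLouter : ∀ v ∈ Finset.Icc (n + 1) (3 * n),
      ∃! c : ZMod n × ZMod n,
        ((c.1 - c.2).val = 2 * p + α - 3 ∨ (c.1 - c.2).val = 2 * p + α + 1) ∧
          (L c.1 c.2).natAbs = v)
    (hLpos : ∀ b : ZMod n, 0 < L (b + ((2 * p + α - 3 : ℕ) : ZMod n)) b)
    (hLneg : ∀ b : ZMod n, L (b + ((2 * p + α + 1 : ℕ) : ZMod n)) b < 0)
    (hL0 : L ((2 * p + α - 3 : ℕ) : ZMod n) 0 ≠ 2 * (n : ℤ) - 1)
    (hL0' : -(L ((2 * p + α + 1 : ℕ) : ZMod n) 0) ≠ 2 * (n : ℤ) - 1)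
    -- two pairs of bijections, each satisfying the required restrictions
    (fI fJ fI' fJ' : ℕ → ℕ)
    (hfI : Set.BijOn fI (Set.Iio p) (Set.Iio p))
    (hfJ : Set.BijOn fJ (Set.Iio (p - 1)) (Set.Iio (p - 1)))
    (hfI' : Set.BijOn fI' (Set.Iio p) (Set.Iio p))
    (hfJ' : Set.BijOn fJ' (Set.Iio (p - 1)) (Set.Iio (p - 1)))
    (hfI0 : fI 0 = 0) (hfI0' : fI' 0 = 0)
    (hfIne : ∀ i < p, 2 * (fI i : ℤ) ≠ 2 * (p : ℤ) - (i : ℤ) + 1)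
    (hfIne' : ∀ i < p, 2 * (fI' i : ℤ) ≠ 2 * (p : ℤ) - (i : ℤ) + 1)
    (hfJne : ∀ j < p - 1, 4 * (fJ j : ℤ) ≠ (p : ℤ) - (j : ℤ) - 4)
    (hfJne' : ∀ j < p - 1, 4 * (fJ' j : ℤ) ≠ (p : ℤ) - (j : ℤ) - 4)
    -- the two pairs are distinct (as pairs of bijections of the relevant domains)
    (hdistinct : ¬ ((∀ i < p, fI i = fI' i) ∧ (∀ j < p - 1, fJ j = fJ' j))) :
    ¬ ArrEquiv n (Merged n p α fI fJ L) (Merged n p α fI' fJ' L) := by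
  intro H
  obtain ⟨ρ, σ, ε, hε, hcase⟩ := H
  have hn0 : 0 < n := Nat.pos_of_ne_zero (NeZero.ne n)
  have hn0' : (0 : ℤ) ≤ (n : ℤ) := Int.natCast_nonneg n
  have hpv : (1 : ℤ) ≤ (p : ℤ) := by exact_mod_cast hp
  have hpn : 1 * (n : ℤ) ≤ (p : ℤ) * n := mul_le_mul_of_nonneg_right hpv hn0'
  have hnv : (4 * (p : ℤ) + 3 + 1) ≤ (n : ℤ) := by exact_mod_cast hn
  have hLbd : ∀ a b : ZMod n, (L a b).natAbs ≤ 3 * n := by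
    intro a b
    by_cases h0 : L a b = 0
    · simp [h0]
    · have := hL.2.2.2.2.1 a b h0
      rw [Finset.mem_Icc] at this
      omega
  have hfIb : ∀ i < p, fI i < p := fun i hi => hfI.1 hi
  have hfIb' : ∀ i < p, fI' i < p := fun i hi => hfI'.1 hi
  have hfJb : ∀ j < p - 1, fJ j < p - 1 := fun j hj => hfJ.1 hj
  have hfJb' : ∀ j < p - 1, fJ' j < p - 1 := fun j hj => hfJ'.1 hj
  have habs : ∀ z w : ℤ, z = ε * w → w.natAbs = z.natAbs := by
    intro z w hz
    rcases hε with rfl | rfl <;> simp [hz]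
  have hvabs : ∀ x : ℕ, x < n →
      (-((4 * (p : ℤ) + 3) * (n : ℤ)) + 2 * (x : ℤ)).natAbs = (4 * p + 3) * n - 2 * x := by
    intro x hx
    have hxv : (x : ℤ) ≤ (n : ℤ) - 1 := by omega
    have hle : 2 * x ≤ (4 * p + 3) * n := by nlinarith
    have heq : -((4 * (p : ℤ) + 3) * (n : ℤ)) + 2 * (x : ℤ)
        = -(((4 * p + 3) * n - 2 * x : ℕ) : ℤ) := by
      rw [Nat.cast_sub hle]; push_cast; ring
    rw [heq, Int.natAbs_neg, Int.natAbs_natCast]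
  have hvneg : ∀ x : ℕ, x < n → -((4 * (p : ℤ) + 3) * (n : ℤ)) + 2 * (x : ℤ) < 0 := by
    intro x hx
    have hxv : (x : ℤ) ≤ (n : ℤ) - 1 := by omega
    nlinarith
  rcases hcase with hcase | hcase
  · -- non-transposed case
    have key : ∀ x : ℕ, x < n →
        σ (-((α : ZMod n) * ((x : ℕ) : ZMod n))) = -((α : ZMod n) * ((x : ℕ) : ZMod n)) ∧
        ρ (((2 * p : ℕ) : ZMod n) - (α : ZMod n) * ((x : ℕ) : ZMod n))
          = ((2 * p : ℕ) : ZMod n) - (α : ZMod n) * ((x : ℕ) : ZMod n) ∧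
        ε = 1 := by
      intro x hx
      have h1 : Merged n p α fI' fJ' L
          (((2 * p : ℕ) : ZMod n) - (α : ZMod n) * ((x : ℕ) : ZMod n))
          (-((α : ZMod n) * ((x : ℕ) : ZMod n)))
          = -((4 * (p : ℤ) + 3) * (n : ℤ)) + 2 * (x : ℤ) :=
        merged_at_D2p hp hn hα1 hgcd L fI' fJ' x hx
      have h2 := hcase (((2 * p : ℕ) : ZMod n) - (α : ZMod n) * ((x : ℕ) : ZMod n))
        (-((α : ZMod n) * ((x : ℕ) : ZMod n)))
      rw [h1] at h2
      have h3 : (Merged n p α fI fJ L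
          (ρ (((2 * p : ℕ) : ZMod n) - (α : ZMod n) * ((x : ℕ) : ZMod n)))
          (σ (-((α : ZMod n) * ((x : ℕ) : ZMod n))))).natAbs = (4 * p + 3) * n - 2 * x := by
        rw [habs _ _ h2, hvabs x hx]
      obtain ⟨hd, hb, hval⟩ := keyUnique hp hn hgcd L hLbd fI fJ hfIb hfJb x hx _ _ h3
      have hρa : ρ (((2 * p : ℕ) : ZMod n) - (α : ZMod n) * ((x : ℕ) : ZMod n))
          = ((2 * p : ℕ) : ZMod n) - (α : ZMod n) * ((x : ℕ) : ZMod n) := by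
        have hsub := congrArg (fun t : ℕ => ((t : ℕ) : ZMod n)) hd
        simp only [cast_val_eq] at hsub
        have := eq_add_of_sub_eq hsub
        rw [this, hb]; ring
      have hε1 : ε = 1 := by
        rcases hε with rfl | rfl
        · rfl
        · exfalso
          rw [hval] at h2
          have := hvneg x hx
          linarith
      exact ⟨hb, hρa, hε1⟩
    have hε1 : ε = 1 := (key 0 (by omega)).2.2
    have hσ : ∀ z : ZMod n, σ z = z := by
      intro z
      obtain ⟨x, hx, hw⟩ := alpha_mul_surj hgcd (-z)
      have h := (key x hx).1
      rw [hw, neg_neg] at h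
      exact h
    have hρ : ∀ z : ZMod n, ρ z = z := by
      intro z
      obtain ⟨x, hx, hw⟩ := alpha_mul_surj hgcd (((2 * p : ℕ) : ZMod n) - z)
      have h := (key x hx).2.1
      rw [hw, show ((2 * p : ℕ) : ZMod n) - (((2 * p : ℕ) : ZMod n) - z) = z from by ring] at h
      exact h
    have hBB : ∀ i j : ZMod n, Merged n p α fI' fJ' L i j = Merged n p α fI fJ L i j := by
      intro i j
      rw [hcase i j, hε1, one_mul, hρ, hσ]
    refine hdistinct ⟨fun i hi => ?_, fun j hj => ?_⟩
    · have h := hBB ((2 * i : ℕ) : ZMod n) 0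
      rw [merged_at_row hp hn hα1 L fI' fJ' i hi, merged_at_row hp hn hα1 L fI fJ i hi] at h
      have hne : (n : ℤ) ≠ 0 := by exact_mod_cast hn0.ne'
      have hcancel : (fI i : ℤ) * (n : ℤ) = (fI' i : ℤ) * (n : ℤ) := by linarith
      have := mul_right_cancel₀ hne hcancel
      exact_mod_cast this
    · have h := hBB ((2 * p + 2 + 2 * j : ℕ) : ZMod n) 0
      rw [merged_at_col hp hn hα1 L fI' fJ' j hj, merged_at_col hp hn hα1 L fI fJ j hj] at h
      have hne : (n : ℤ) ≠ 0 := by exact_mod_cast hn0.ne'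
      have hcancel : (fJ j : ℤ) * (n : ℤ) = (fJ' j : ℤ) * (n : ℤ) := by linarith
      have := mul_right_cancel₀ hne hcancel
      exact_mod_cast this
  · -- transposed case
    have key : ∀ x : ℕ, x < n →
        σ (((2 * p : ℕ) : ZMod n) - (α : ZMod n) * ((x : ℕ) : ZMod n))
          = -((α : ZMod n) * ((x : ℕ) : ZMod n)) ∧
        ρ (-((α : ZMod n) * ((x : ℕ) : ZMod n)))
          = -((α : ZMod n) * ((x : ℕ) : ZMod n)) + ((2 * p : ℕ) : ZMod n) ∧
        ε = 1 := by
      intro x hx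
      have h1 : Merged n p α fI' fJ' L
          (((2 * p : ℕ) : ZMod n) - (α : ZMod n) * ((x : ℕ) : ZMod n))
          (-((α : ZMod n) * ((x : ℕ) : ZMod n)))
          = -((4 * (p : ℤ) + 3) * (n : ℤ)) + 2 * (x : ℤ) :=
        merged_at_D2p hp hn hα1 hgcd L fI' fJ' x hx
      have h2 := hcase (((2 * p : ℕ) : ZMod n) - (α : ZMod n) * ((x : ℕ) : ZMod n))
        (-((α : ZMod n) * ((x : ℕ) : ZMod n)))
      rw [h1] at h2
      have h3 : (Merged n p α fI fJ L
          (ρ (-((α : ZMod n) * ((x : ℕ) : ZMod n))))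
          (σ (((2 * p : ℕ) : ZMod n) - (α : ZMod n) * ((x : ℕ) : ZMod n)))).natAbs
          = (4 * p + 3) * n - 2 * x := by
        rw [habs _ _ h2, hvabs x hx]
      obtain ⟨hd, hb, hval⟩ := keyUnique hp hn hgcd L hLbd fI fJ hfIb hfJb x hx _ _ h3
      have hρb : ρ (-((α : ZMod n) * ((x : ℕ) : ZMod n)))
          = -((α : ZMod n) * ((x : ℕ) : ZMod n)) + ((2 * p : ℕ) : ZMod n) := by
        have hsub := congrArg (fun t : ℕ => ((t : ℕ) : ZMod n)) hd
        simp only [cast_val_eq] at hsub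
        have := eq_add_of_sub_eq hsub
        rw [this, hb]; ring
      have hε1 : ε = 1 := by
        rcases hε with rfl | rfl
        · rfl
        · exfalso
          rw [hval] at h2
          have := hvneg x hx
          linarith
      exact ⟨hb, hρb, hε1⟩
    have hε1 : ε = 1 := (key 0 (by omega)).2.2
    have hσ : ∀ z : ZMod n, σ z = z - ((2 * p : ℕ) : ZMod n) := by
      intro z
      obtain ⟨x, hx, hw⟩ := alpha_mul_surj hgcd (((2 * p : ℕ) : ZMod n) - z)
      have h := (key x hx).1
      rw [hw] at h
      rw [show ((2 * p : ℕ) : ZMod n) - (((2 * p : ℕ) : ZMod n) - z) = z from by ring] at h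
      rw [h]; ring
    have hρ : ∀ z : ZMod n, ρ z = z + ((2 * p : ℕ) : ZMod n) := by
      intro z
      obtain ⟨x, hx, hw⟩ := alpha_mul_surj hgcd (-z)
      have h := (key x hx).2.1
      rw [hw, neg_neg] at h
      exact h
    have hL1 : Merged n p α fI' fJ' L ((2 * p + α : ℕ) : ZMod n) 0
        = (4 * (p : ℤ) + 1) * (n : ℤ) + 1 :=
      merged_at_D2pa hp hn hα1 hα2 L fI' fJ'
    have h2 := hcase ((2 * p + α : ℕ) : ZMod n) 0
    rw [hL1, hε1, one_mul, hρ, hσ, zero_add] at h2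
    rw [show ((2 * p + α : ℕ) : ZMod n) - ((2 * p : ℕ) : ZMod n) = ((α : ℕ) : ZMod n) from by
      push_cast; ring] at h2
    have hbad := merged_bad hn1 hp hn hα1 hα2 L hLbd fI fJ
    have habs2 : |Merged n p α fI fJ L ((2 * p : ℕ) : ZMod n) ((α : ℕ) : ZMod n)|
        ≤ 3 * (n : ℤ) := by
      rw [Int.abs_eq_natAbs]
      exact_mod_cast hbad
    rw [← h2] at habs2
    have hge := le_abs_self ((4 * (p : ℤ) + 1) * (n : ℤ) + 1)
    linarith
end

section
/- Let p > 0, n ≥ 4p, γ > 0, α an integer with 2p−1 ≤ α ≤ n−2p−1 and gcd(α, n) = 1, and let f_I : {0,…,p−1} → {0,…,p−1} and f_J : {0,…,p−2} → {0,…,p−2} be bijections, and let A′ = A′(n,p,γ,α,f_I,f_J). Then for every row a ∈ ℤ_n of A′ and all i ∈ {0,…,p−1} and j ∈ {0,…,p−2}: (4p+γ)n > Σ(2i) ≥ γn+2, and 0 > −n > Σ(2p+2j+1) > d_{2p}(r_a) + p + (γ+1)n. -/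
lemma zmcomp (n : ℕ) [NeZero n] (c : ZMod n) : (-1 - c).val = n - 1 - c.val := by
  have hc := ZMod.val_lt c
  have hn : 0 < n := Nat.pos_of_ne_zero (NeZero.ne n)
  have h1 : ((n - 1 - c.val : ℕ) : ZMod n) = -1 - c := by
    have e : ((n - 1 - c.val) + (1 + c.val) : ℕ) = n := by omega
    have h2 : (((n - 1 - c.val) + (1 + c.val) : ℕ) : ZMod n) = 0 := by
      rw [e]; exact ZMod.natCast_self n
    push_cast at h2
    have h3 : ((c.val : ℕ) : ZMod n) = c := by simp [ZMod.natCast_val, ZMod.cast_id]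
    rw [h3] at h2
    linear_combination h2
  rw [← h1, ZMod.val_natCast_of_lt (by omega)]

section diags
variable (n p γ α : ℕ) (fI fJ : ℕ → ℕ)

lemma diag_even (hn : 4 * p ≤ n) (hp : 0 < p) (i : ℕ) (hi : i < p) (a : ZMod n) :
    diagRow (Aent n p γ α fI fJ) a (2 * i) =
      ((γ : ℤ) + 2) * n + 4 * (fI i) * n - 2 * (((((2 * i : ℕ) : ZMod n)) - a).val : ℤ) := by
  have hd : ((a - (a - ((2 * i : ℕ) : ZMod n))).val) = 2 * i := by
    rw [sub_sub_cancel, ZMod.val_natCast_of_lt (by omega)]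
  simp only [diagRow, Aent, hd]
  rw [if_pos ⟨by omega, by omega⟩]
  have h2 : 2 * i / 2 = i := by omega
  rw [h2, neg_sub]

lemma diag_odd (hn : 4 * p ≤ n) (hp : 0 < p) (i : ℕ) (hi : i < p) (a : ZMod n) :
    diagRow (Aent n p γ α fI fJ) a (2 * i + 1) =
      -(γ : ℤ) * n - 4 * (fI i) * n - 1 - 2 * ((a - ((2 * i + 1 : ℕ) : ZMod n)).val : ℤ) := by
  have hd : ((a - (a - ((2 * i + 1 : ℕ) : ZMod n))).val) = 2 * i + 1 := by
    rw [sub_sub_cancel, ZMod.val_natCast_of_lt (by omega)]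
  simp only [diagRow, Aent, hd]
  rw [if_neg (by omega), if_pos ⟨by omega, by omega⟩]
  have h2 : (2 * i + 1 - 1) / 2 = i := by omega
  rw [h2]

lemma diag_2p (hn : 4 * p ≤ n) (hp : 0 < p) (a : ZMod n) :
    diagRow (Aent n p γ α fI fJ) a (2 * p) =
      -(4 * (p : ℤ) + γ) * n
        + 2 * ((((α : ZMod n))⁻¹ * (((2 * p : ℕ) : ZMod n) - a)).val : ℤ) := by
  have hd : ((a - (a - ((2 * p : ℕ) : ZMod n))).val) = 2 * p := by
    rw [sub_sub_cancel, ZMod.val_natCast_of_lt (by omega)]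
  simp only [diagRow, Aent, hd]
  rw [if_neg (by omega), if_neg (by omega)]
  simp only [if_pos trivial, eq_self_iff_true, if_true, neg_sub]

lemma diag_odd2 (hn : 4 * p ≤ n) (hp : 0 < p) (j : ℕ) (hj : j < p - 1) (a : ZMod n) :
    diagRow (Aent n p γ α fI fJ) a (2 * p + 1 + 2 * j) =
      (4 * (p : ℤ) + γ - 6) * n - 4 * (fJ j) * n + 1
        + 2 * (((((2 * p + 1 + 2 * j : ℕ) : ZMod n)) - a).val : ℤ) := by
  have hd : ((a - (a - ((2 * p + 1 + 2 * j : ℕ) : ZMod n))).val) = 2 * p + 1 + 2 * j := by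
    rw [sub_sub_cancel, ZMod.val_natCast_of_lt (by omega)]
  simp only [diagRow, Aent, hd]
  rw [if_neg (by omega), if_neg (by omega), if_neg (by omega),
    if_pos ⟨by omega, by omega, by omega⟩]
  have h2 : (2 * p + 1 + 2 * j - (2 * p + 1)) / 2 = j := by omega
  rw [h2, neg_sub]

lemma diag_even2 (hn : 4 * p ≤ n) (hp : 0 < p) (j : ℕ) (hj : j < p - 1) (a : ZMod n) :
    diagRow (Aent n p γ α fI fJ) a (2 * p + 2 + 2 * j) =
      -(4 * (p : ℤ) + γ - 4) * n + 4 * (fJ j) * n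
        + 2 * ((a - (((2 * p + 2 + 2 * j : ℕ) : ZMod n))).val : ℤ) := by
  have hd : ((a - (a - ((2 * p + 2 + 2 * j : ℕ) : ZMod n))).val) = 2 * p + 2 + 2 * j := by
    rw [sub_sub_cancel, ZMod.val_natCast_of_lt (by omega)]
  simp only [diagRow, Aent, hd]
  rw [if_neg (by omega), if_neg (by omega), if_neg (by omega), if_neg (by omega),
    if_pos ⟨by omega, by omega, by omega⟩]
  have h2 : (2 * p + 2 + 2 * j - (2 * p + 2)) / 2 = j := by omega
  rw [h2]

end diags

theorem statement15 (n p γ α : ℕ) (hp : 0 < p) (hn : 4 * p ≤ n) (hγ : 0 < γ)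
    (hα1 : 2 * p - 1 ≤ α) (hα2 : α ≤ n - 2 * p - 1) (hgcd : Nat.gcd α n = 1)
    (fI fJ : ℕ → ℕ)
    (hfI : Set.BijOn fI (Set.Iio p) (Set.Iio p))
    (hfJ : Set.BijOn fJ (Set.Iio (p - 1)) (Set.Iio (p - 1)))
    (A' : ZMod n → ZMod n → ℤ) (hA' : A' = Aent n p γ α fI fJ) :
    ∀ a : ZMod n,
      (∀ i < p,
        (4 * (p : ℤ) + (γ : ℤ)) * (n : ℤ) > sigmaRow A' a (2 * i) ∧
        sigmaRow A' a (2 * i) ≥ (γ : ℤ) * (n : ℤ) + 2) ∧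
      (∀ j < p - 1,
        (0 : ℤ) > -(n : ℤ) ∧
        -(n : ℤ) > sigmaRow A' a (2 * p + 2 * j + 1) ∧
        sigmaRow A' a (2 * p + 2 * j + 1) >
          diagRow A' a (2 * p) + (p : ℤ) + ((γ : ℤ) + 1) * (n : ℤ)) := by
  subst hA'
  have hn0 : 0 < n := by omega
  haveI : NeZero n := ⟨by omega⟩
  intro a
  set A := Aent n p γ α fI fJ with hA
  have step : ∀ x : ℕ, sigmaRow A a (x + 1) = sigmaRow A a x + diagRow A a (x + 1) :=
    fun x => Finset.sum_range_succ _ _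
  -- pair sums on the first 2p diagonals
  have pair1 : ∀ i < p, diagRow A a (2 * i) + diagRow A a (2 * i + 1) = 1 := by
    intro i hi
    rw [diag_even n p γ α fI fJ hn hp i hi, diag_odd n p γ α fI fJ hn hp i hi]
    set c : ZMod n := ((2 * i : ℕ) : ZMod n) - a with hc
    have h1 : a - ((2 * i + 1 : ℕ) : ZMod n) = -1 - c := by
      rw [hc]; push_cast; ring
    rw [h1, zmcomp]
    have hcv : c.val < n := ZMod.val_lt c
    have hcast : ((n - 1 - c.val : ℕ) : ℤ) = (n : ℤ) - 1 - (c.val : ℤ) := by omega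
    rw [hcast]; ring
  have pair2 : ∀ j < p - 1,
      diagRow A a (2 * p + 1 + 2 * j) + diagRow A a (2 * p + 2 + 2 * j) = -1 := by
    intro j hj
    rw [diag_odd2 n p γ α fI fJ hn hp j hj, diag_even2 n p γ α fI fJ hn hp j hj]
    set c : ZMod n := ((2 * p + 1 + 2 * j : ℕ) : ZMod n) - a with hc
    have h1 : a - ((2 * p + 2 + 2 * j : ℕ) : ZMod n) = -1 - c := by
      rw [hc]; push_cast; ring
    rw [h1, zmcomp]
    have hcv : c.val < n := ZMod.val_lt c
    have hcast : ((n - 1 - c.val : ℕ) : ℤ) = (n : ℤ) - 1 - (c.val : ℤ) := by omega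
    rw [hcast]; ring
  -- partial row sums up to even diagonals
  have hS : ∀ i < p, sigmaRow A a (2 * i) = (i : ℤ) + diagRow A a (2 * i) := by
    intro i
    induction i with
    | zero => intro _; simp [sigmaRow]
    | succ k ih =>
      intro hk
      have e : 2 * (k + 1) = 2 * k + 1 + 1 := by omega
      rw [e, step, step]
      have hp1 := pair1 k (by omega)
      have ihk := ih (by omega)
      have e2 : 2 * k + 1 + 1 = 2 * (k + 1) := by omega
      rw [e2] at *
      push_cast
      linarith
  -- Σ(2p-1) = p
  have base : sigmaRow A a (2 * (p - 1) + 1) = (p : ℤ) := by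
    rw [step]
    have := hS (p - 1) (by omega)
    have := pair1 (p - 1) (by omega)
    have hcast : (((p - 1 : ℕ)) : ℤ) = (p : ℤ) - 1 := by omega
    linarith [hS (p - 1) (by omega), pair1 (p - 1) (by omega)]
  -- partial row sums up to odd diagonals past 2p
  have hT : ∀ j < p - 1, sigmaRow A a (2 * p + 2 * j + 1) =
      (p : ℤ) - (j : ℤ) + diagRow A a (2 * p) + diagRow A a (2 * p + 1 + 2 * j) := by
    intro j
    induction j with
    | zero =>
      intro hj
      have e : 2 * p + 2 * 0 + 1 = (2 * (p - 1) + 1) + 1 + 1 := by omega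
      rw [e, step, step]
      have e2 : 2 * (p - 1) + 1 + 1 = 2 * p := by omega
      rw [e2]
      have e3 : 2 * p + 1 = 2 * p + 1 + 2 * 0 := by omega
      rw [e3] at *
      rw [base]
      push_cast
      ring
    | succ k ih =>
      intro hk
      have e : 2 * p + 2 * (k + 1) + 1 = (2 * p + 2 * k + 1) + 1 + 1 := by omega
      rw [e, step, step]
      have ihk := ih (by omega)
      have hpr := pair2 k (by omega)
      have e2 : 2 * p + 2 * k + 1 + 1 = 2 * p + 2 + 2 * k := by omega
      have e3 : 2 * p + 2 * k + 1 + 1 + 1 = 2 * p + 1 + 2 * (k + 1) := by omega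
      rw [e3, e2]
      push_cast
      linarith
  constructor
  · -- first part
    intro i hi
    have hSi := hS i hi
    rw [hSi, diag_even n p γ α fI fJ hn hp i hi]
    set x : ℕ := ((((2 * i : ℕ) : ZMod n)) - a).val with hx
    have hxlt : x < n := ZMod.val_lt _
    have hx1 : (x : ℤ) ≤ (n : ℤ) - 1 := by omega
    have hx0 : (0 : ℤ) ≤ (x : ℤ) := by positivity
    have hfIi : fI i < p := hfI.1 hi
    have hfc : (fI i : ℤ) ≤ (p : ℤ) - 1 := by omega
    have hfc0 : (0 : ℤ) ≤ (fI i : ℤ) := by positivity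
    have hmul : 4 * (fI i : ℤ) * (n : ℤ) ≤ 4 * ((p : ℤ) - 1) * (n : ℤ) := by
      apply mul_le_mul_of_nonneg_right (by linarith) (by positivity)
    have hmul0 : (0 : ℤ) ≤ 4 * (fI i : ℤ) * (n : ℤ) := by positivity
    have hic : (i : ℤ) ≤ (p : ℤ) - 1 := by omega
    have hic0 : (0 : ℤ) ≤ (i : ℤ) := by positivity
    have hnc : 4 * (p : ℤ) ≤ (n : ℤ) := by exact_mod_cast hn
    have hpc : (1 : ℤ) ≤ (p : ℤ) := by exact_mod_cast hp
    have hγc : (1 : ℤ) ≤ (γ : ℤ) := by exact_mod_cast hγ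
    constructor
    · linarith
    · linarith
  · -- second part
    intro j hj
    have hnc : 4 * (p : ℤ) ≤ (n : ℤ) := by exact_mod_cast hn
    have hpc : (1 : ℤ) ≤ (p : ℤ) := by exact_mod_cast hp
    have hγc : (1 : ℤ) ≤ (γ : ℤ) := by exact_mod_cast hγ
    have hp2 : 2 ≤ p := by omega
    refine ⟨by push_cast; linarith, ?_, ?_⟩
    · rw [hT j hj, diag_2p n p γ α fI fJ hn hp, diag_odd2 n p γ α fI fJ hn hp j hj]
      set y : ℕ := (((α : ZMod n))⁻¹ * (((2 * p : ℕ) : ZMod n) - a)).val with hy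
      set z : ℕ := ((((2 * p + 1 + 2 * j : ℕ) : ZMod n)) - a).val with hz
      have hy1' : y < n := ZMod.val_lt _
      have hy2 : (y : ℤ) ≤ (n : ℤ) - 1 := by omega
      have hz1 : z < n := ZMod.val_lt _
      have hz2 : (z : ℤ) ≤ (n : ℤ) - 1 := by omega
      have hjc : (0 : ℤ) ≤ (j : ℤ) := by positivity
      have hmul0 : (0 : ℤ) ≤ 4 * (fJ j : ℤ) * (n : ℤ) := by positivity
      linarith
    · rw [hT j hj, diag_odd2 n p γ α fI fJ hn hp j hj]
      set z : ℕ := ((((2 * p + 1 + 2 * j : ℕ) : ZMod n)) - a).val with hz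
      have hz0 : (0 : ℤ) ≤ (z : ℤ) := by positivity
      have hfJj : fJ j < p - 1 := hfJ.1 hj
      have hfc : (fJ j : ℤ) ≤ (p : ℤ) - 2 := by omega
      have hjc : (j : ℤ) ≤ (p : ℤ) - 2 := by omega
      have hmul : 4 * (fJ j : ℤ) * (n : ℤ) ≤ 4 * ((p : ℤ) - 2) * (n : ℤ) := by
        apply mul_le_mul_of_nonneg_right (by linarith) (by positivity)
      linarith
end
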